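/- arXiv:1202.1076 — 10 statements merged into one kernel-verified Lean document; each statement's English description precedes it below -/
import Mathlib

section
/- Let α : H → H, (σʲ : H → H)_{j∈ℕ} and γ : H × E → H satisfy the standing regularity conditions, and let g : H → G be three times continuously Fréchet differentiable with Dg, D²g and D³g bounded on H. Define â : H → G, b̂ʲ : H → G (j ∈ ℕ) and ĉ : H × E → G by â(h) = Dg(h)(α(h)) + (1/2)·∑_{j∈ℕ} D²g(h)(σʲ(h), σʲ(h)) + ∫_E ( g(h + γ(h,x)) − g(h) − Dg(h)(γ(h,x)) ) F(dx), b̂ʲ(h) = Dg(h)(σʲ(h)), and ĉ(h,x) = g(h + γ(h,x)) − g(h). Then: (1) for every h ∈ H the series ∑_{j∈ℕ} ‖D²g(h)(σʲ(h), σʲ(h))‖ converges and the integrand defining â is Bochner integrable, so â is well defined; (2) for every n ∈ ℕ there is a constant L̂_n ≥ 0 such that ‖â(h₁) − â(h₂)‖ ≤ L̂_n‖h₁ − h₂‖ for all h₁, h₂ ∈ H with ‖h₁‖, ‖h₂‖ ≤ n; (3) each b̂ʲ is continuously Fréchet differentiable, and for every n ∈ ℕ there exist nonnegative reals (κ̂_nʲ)_{j∈ℕ}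 with ∑_j (κ̂_nʲ)² < ∞ such that ‖b̂ʲ(h₁) − b̂ʲ(h₂)‖ ≤ κ̂_nʲ‖h₁ − h₂‖ and ‖b̂ʲ(h)‖ ≤ κ̂_nʲ whenever ‖h₁‖, ‖h₂‖, ‖h‖ ≤ n; (4) for every n ∈ ℕ there is a measurable ρ̂_n : E → [0,∞) with ∫_E ρ̂_n(x)² F(dx) < ∞ such that ‖ĉ(h₁,x) − ĉ(h₂,x)‖ ≤ ρ̂_n(x)‖h₁ − h₂‖ and ‖ĉ(h,x)‖ ≤ ρ̂_n(x) for all x ∈ E and all h₁, h₂, h ∈ H with norms ≤ n; (5) if moreover g is the restriction of a continuous linear map from H to G, then the ρ̂_n in (4) can be chosen so that ∫_E (ρ̂_n(x)² ∨ ρ̂_n(x)⁴) F(dx) < ∞. -/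
/-!
Every estimate is a mean value inequality for `g`, `Dg` or `D²g`, fed with the bounds that the
standing conditions give for `α`, `σʲ` and `γ` on the ball of radius `n`. The jump integrand of `â`
is a first-order Taylor remainder, of norm at most `sup ‖D²g‖ · ρₙ²`, hence integrable. Its
variation in `h` is controlled by `‖D²g‖` when the increment `γ(h, x)` moves and by `‖D³g‖`
(through the symmetry of `D²g`) when the base point moves, both times `ρₙ²`; likewise the
second-order series is dominated termwise by multiples of `(κₙʲ)²`. For linear `g` one has
`ĉ(h, x) = g(γ(h, x))`, so `ρ̂ₙ = ‖g‖ ρₙ` keeps the fourth moment.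
-/

open MeasureTheory

section MeanValue

variable {X Y : Type*} [NormedAddCommGroup X] [NormedSpace ℝ X]
  [NormedAddCommGroup Y] [NormedSpace ℝ Y] {f : X → Y} {C : ℝ}

theorem norm_sub_le_of_hasFDerivAt_of_norm_le {f' : X → X →L[ℝ] Y}
    (hf : ∀ x, HasFDerivAt f (f' x) x) (hC : ∀ x, ‖f' x‖ ≤ C) (a b : X) :
    ‖f a - f b‖ ≤ C * ‖a - b‖ :=
  convex_univ.norm_image_sub_le_of_norm_hasFDerivWithin_le
    (fun x _ => (hf x).hasFDerivWithinAt) (fun x _ => hC x) trivial trivial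

theorem norm_comp_add_sub_le (hf : Differentiable ℝ f) (hC : ∀ x, ‖fderiv ℝ f x‖ ≤ C)
    (a v : X) : ‖f (a + v) - f a‖ ≤ C * ‖v‖ := by
  simpa using norm_sub_le_of_hasFDerivAt_of_norm_le (fun x => (hf x).hasFDerivAt) hC (a + v) a

theorem norm_fderiv_sub_le (hf : ContDiff ℝ 2 f)
    (hC : ∀ x, ‖fderiv ℝ (fderiv ℝ f) x‖ ≤ C) (a b : X) :
    ‖fderiv ℝ f a - fderiv ℝ f b‖ ≤ C * ‖a - b‖ :=
  norm_sub_le_of_hasFDerivAt_of_norm_le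
    (fun x => ((hf.fderiv_right (m := 1) le_rfl).differentiable one_ne_zero x).hasFDerivAt) hC a b

theorem norm_sub_sub_fderiv_le (hf : ContDiff ℝ 2 f)
    (hC : ∀ x, ‖fderiv ℝ (fderiv ℝ f) x‖ ≤ C) (a : X) {u v : X} {r : ℝ}
    (hu : ‖u‖ ≤ r) (hv : ‖v‖ ≤ r) :
    ‖f (a + u) - f (a + v) - fderiv ℝ f a (u - v)‖ ≤ C * r * ‖u - v‖ := by
  have hC0 : 0 ≤ C := (ContinuousLinearMap.opNorm_nonneg _).trans (hC a)
  have hmem : ∀ {w : X}, ‖w‖ ≤ r → a + w ∈ Metric.closedBall a r := fun hw => by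
    rwa [mem_closedBall_iff_norm, add_sub_cancel_left]
  have key : ‖f (a + u) - f (a + v) - fderiv ℝ f a ((a + u) - (a + v))‖
      ≤ C * r * ‖(a + u) - (a + v)‖ :=
    (convex_closedBall a r).norm_image_sub_le_of_norm_fderiv_le'
      (fun x _ => (hf.differentiable two_ne_zero) x) (fun x hx => ?_) (hmem hv) (hmem hu)
  · simpa only [add_sub_add_left_eq_sub] using key
  · calc ‖fderiv ℝ f x - fderiv ℝ f a‖ ≤ C * ‖x - a‖ := norm_fderiv_sub_le hf hC x a
      _ ≤ C * r := by gcongr; exact mem_closedBall_iff_norm.1 hx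

theorem norm_taylor_remainder_le (hf : ContDiff ℝ 2 f)
    (hC : ∀ x, ‖fderiv ℝ (fderiv ℝ f) x‖ ≤ C) (a v : X) :
    ‖f (a + v) - f a - fderiv ℝ f a v‖ ≤ C * ‖v‖ ^ 2 := by
  simpa [sq, mul_assoc] using
    norm_sub_sub_fderiv_le hf hC a le_rfl (norm_zero.trans_le (norm_nonneg v))

theorem norm_second_difference_le (hf : ContDiff ℝ 2 f)
    (hC : ∀ x, ‖fderiv ℝ (fderiv ℝ f) x‖ ≤ C) (v a b : X) :
    ‖(f (a + v) - f a) - (f (b + v) - f b)‖ ≤ C * ‖v‖ * ‖a - b‖ := by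
  have hf' : Differentiable ℝ f := hf.differentiable two_ne_zero
  refine norm_sub_le_of_hasFDerivAt_of_norm_le (f := fun h => f (h + v) - f h)
    (f' := fun h => fderiv ℝ f (h + v) - fderiv ℝ f h) (fun h => ?_) (fun h => ?_) a b
  · exact ((hasFDerivAt_comp_add_right v).2 (hf' (h + v)).hasFDerivAt).sub (hf' h).hasFDerivAt
  · simpa using norm_fderiv_sub_le hf hC (h + v) h

-- Instance search does not find the norm of `X →L X →L X →L Y`, so the operator norm is explicit.
theorem norm_taylor_remainder_sub_le (hf : ContDiff ℝ 3 f)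
    (hC : ∀ x, @Norm.norm _ ContinuousLinearMap.hasOpNorm (fderiv ℝ (fderiv ℝ (fderiv ℝ f)) x) ≤ C)
    (v a b : X) :
    ‖(f (a + v) - f a - fderiv ℝ f a v) - (f (b + v) - f b - fderiv ℝ f b v)‖
      ≤ C * ‖v‖ ^ 2 * ‖a - b‖ := by
  have hf' : Differentiable ℝ f := hf.differentiable (by norm_num)
  have hDf : ContDiff ℝ 2 (fderiv ℝ f) := hf.fderiv_right (by norm_num)
  -- symmetry of the second derivative turns the derivative of `h ↦ Df h v` into `D²f h v`
  have hDf_apply : ∀ h, HasFDerivAt (fun h => fderiv ℝ f h v) (fderiv ℝ (fderiv ℝ f) h v) h :=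
    fun h => ((ContinuousLinearMap.apply ℝ Y v).hasFDerivAt.comp h
      ((hDf.differentiable two_ne_zero) h).hasFDerivAt).congr_fderiv
        (ContinuousLinearMap.ext fun w =>
          hf.contDiffAt.isSymmSndFDerivAt
            (by rw [minSmoothness_of_isRCLikeNormedField]; norm_num) w v)
  refine norm_sub_le_of_hasFDerivAt_of_norm_le
    (f := fun h => f (h + v) - f h - fderiv ℝ f h v)
    (f' := fun h => fderiv ℝ f (h + v) - fderiv ℝ f h - fderiv ℝ (fderiv ℝ f) h v)
    (fun h => ?_) (fun h => ?_) a b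
  · exact (((hasFDerivAt_comp_add_right v).2 (hf' (h + v)).hasFDerivAt).sub
      (hf' h).hasFDerivAt).sub (hDf_apply h)
  · simpa using norm_taylor_remainder_le hDf hC h v

theorem norm_taylor_remainder_sub_taylor_remainder_le (hf : ContDiff ℝ 3 f) {C₂ C₃ : ℝ}
    (hC₂ : ∀ x, ‖fderiv ℝ (fderiv ℝ f) x‖ ≤ C₂)
    (hC₃ : ∀ x,
      @Norm.norm _ ContinuousLinearMap.hasOpNorm (fderiv ℝ (fderiv ℝ (fderiv ℝ f)) x) ≤ C₃)
    {a b u v : X} {r : ℝ} (hu : ‖u‖ ≤ r) (hv : ‖v‖ ≤ r) :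
    ‖(f (a + u) - f a - fderiv ℝ f a u) - (f (b + v) - f b - fderiv ℝ f b v)‖
      ≤ C₂ * r * ‖u - v‖ + C₃ * ‖v‖ ^ 2 * ‖a - b‖ :=
  calc _ = ‖(f (a + u) - f (a + v) - fderiv ℝ f a (u - v))
        + ((f (a + v) - f a - fderiv ℝ f a v) - (f (b + v) - f b - fderiv ℝ f b v))‖ := by
        rw [map_sub]; congr 1; abel
    _ ≤ _ := (norm_add_le _ _).trans (add_le_add
        (norm_sub_sub_fderiv_le (hf.of_le (by norm_num)) hC₂ a hu hv)
        (norm_taylor_remainder_sub_le hf hC₃ v a b))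

end MeanValue

section Bilinear

variable {𝕜 X Y : Type*} [NontriviallyNormedField 𝕜] [NormedAddCommGroup X] [NormedSpace 𝕜 X]
  [NormedAddCommGroup Y] [NormedSpace 𝕜 Y]

theorem ContinuousLinearMap.norm_apply_sub_apply_le (A₁ A₂ : X →L[𝕜] Y) (u₁ u₂ : X) :
    ‖A₁ u₁ - A₂ u₂‖ ≤ ‖A₁ - A₂‖ * ‖u₁‖ + ‖A₂‖ * ‖u₁ - u₂‖ :=
  calc ‖A₁ u₁ - A₂ u₂‖ = ‖(A₁ - A₂) u₁ + A₂ (u₁ - u₂)‖ := by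
        rw [sub_apply, map_sub]; abel_nf
    _ ≤ _ := (norm_add_le _ _).trans (add_le_add ((A₁ - A₂).le_opNorm u₁) (A₂.le_opNorm _))

theorem ContinuousLinearMap.norm_apply_apply_sub_apply_apply_le (B₁ B₂ : X →L[𝕜] X →L[𝕜] Y)
    {u₁ u₂ : X} {κ d K M : ℝ} (hu₁ : ‖u₁‖ ≤ κ) (hu₂ : ‖u₂‖ ≤ κ) (hu : ‖u₁ - u₂‖ ≤ κ * d)
    (hB : ‖B₁ - B₂‖ ≤ K * d) (hB₂ : ‖B₂‖ ≤ M) :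
    ‖B₁ u₁ u₁ - B₂ u₂ u₂‖ ≤ (K + 2 * M) * κ ^ 2 * d := by
  have hκ : 0 ≤ κ := (norm_nonneg _).trans hu₁
  have hM : 0 ≤ M := (opNorm_nonneg _).trans hB₂
  have hKd : 0 ≤ K * d := (opNorm_nonneg _).trans hB
  have hκd : 0 ≤ κ * d := (norm_nonneg _).trans hu
  have hBu : ‖B₁ u₁ - B₂ u₂‖ ≤ K * d * κ + M * (κ * d) :=
    (B₁.norm_apply_sub_apply_le B₂ u₁ u₂).trans (by gcongr)
  calc ‖B₁ u₁ u₁ - B₂ u₂ u₂‖ ≤ ‖B₁ u₁ - B₂ u₂‖ * ‖u₁‖ + ‖B₂ u₂‖ * ‖u₁ - u₂‖ :=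
        (B₁ u₁).norm_apply_sub_apply_le (B₂ u₂) u₁ u₂
    _ ≤ (K * d * κ + M * (κ * d)) * κ + (M * κ) * (κ * d) := by
        gcongr; exact B₂.le_of_opNorm_le_of_le hB₂ hu₂
    _ = _ := by ring

theorem ContinuousLinearMap.summable_norm_apply_apply (B : X →L[𝕜] X →L[𝕜] Y) {u : ℕ → X}
    {κ : ℕ → ℝ} (hu : ∀ j, ‖u j‖ ≤ κ j) (hκ : Summable fun j => κ j ^ 2) :
    Summable fun j => ‖B (u j) (u j)‖ :=
  .of_nonneg_of_le (fun _ => norm_nonneg _) (fun j => by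
      have hκj : 0 ≤ κ j := (norm_nonneg _).trans (hu j)
      calc ‖B (u j) (u j)‖ ≤ ‖B‖ * ‖u j‖ * ‖u j‖ := B.le_opNorm₂ _ _
        _ ≤ ‖B‖ * κ j * κ j := by gcongr <;> exact hu j
        _ = ‖B‖ * κ j ^ 2 := by ring)
    (hκ.mul_left ‖B‖)

theorem ContinuousLinearMap.norm_tsum_apply_apply_sub_le [CompleteSpace Y]
    (B₁ B₂ : X →L[𝕜] X →L[𝕜] Y) {u₁ u₂ : ℕ → X} {κ : ℕ → ℝ} {d K M : ℝ}
    (hκ : Summable fun j => κ j ^ 2) (hu₁ : ∀ j, ‖u₁ j‖ ≤ κ j) (hu₂ : ∀ j, ‖u₂ j‖ ≤ κ j)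
    (hu : ∀ j, ‖u₁ j - u₂ j‖ ≤ κ j * d) (hB : ‖B₁ - B₂‖ ≤ K * d) (hB₂ : ‖B₂‖ ≤ M) :
    ‖∑' j, B₁ (u₁ j) (u₁ j) - ∑' j, B₂ (u₂ j) (u₂ j)‖ ≤ (K + 2 * M) * (∑' j, κ j ^ 2) * d := by
  have hle := fun j => B₁.norm_apply_apply_sub_apply_apply_le B₂ (hu₁ j) (hu₂ j) (hu j) hB hB₂
  have hsum : Summable fun j => (K + 2 * M) * κ j ^ 2 * d := (hκ.mul_left _).mul_right _
  rw [← (B₁.summable_norm_apply_apply hu₁ hκ).of_norm.tsum_sub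
    (B₂.summable_norm_apply_apply hu₂ hκ).of_norm]
  calc _ ≤ ∑' j, ‖B₁ (u₁ j) (u₁ j) - B₂ (u₂ j) (u₂ j)‖ :=
        norm_tsum_le_tsum_norm (hsum.of_nonneg_of_le (fun _ => norm_nonneg _) hle)
    _ ≤ ∑' j, (K + 2 * M) * κ j ^ 2 * d :=
        (hsum.of_nonneg_of_le (fun _ => norm_nonneg _) hle).tsum_le_tsum hle hsum
    _ = _ := by rw [tsum_mul_right, tsum_mul_left]

end Bilinear

section Integral

variable {X Y E : Type*} [NormedAddCommGroup X] [NormedSpace ℝ X]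
  [NormedAddCommGroup Y] [NormedSpace ℝ Y] [MeasurableSpace E] {F : Measure E}
  {f : X → Y} {ρ : E → ℝ}

theorem MeasureTheory.Integrable.sq_of_max_sq_pow_four (hρ : Measurable ρ)
    (h : Integrable (fun x => max (ρ x ^ 2) (ρ x ^ 4)) F) : Integrable (fun x => ρ x ^ 2) F :=
  h.mono' (hρ.pow_const 2).aestronglyMeasurable <| .of_forall fun x => by
    rw [Real.norm_of_nonneg (sq_nonneg _)]
    exact le_max_left _ _

theorem MeasureTheory.Integrable.max_sq_pow_four_const_mul (hρ : Measurable ρ)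
    (h : Integrable (fun x => max (ρ x ^ 2) (ρ x ^ 4)) F) (c : ℝ) :
    Integrable (fun x => max ((c * ρ x) ^ 2) ((c * ρ x) ^ 4)) F :=
  (h.const_mul (c ^ 2 + c ^ 4)).mono'
    ((((hρ.const_mul c).pow_const 2).max ((hρ.const_mul c).pow_const 4)).aestronglyMeasurable)
    (.of_forall fun x => by
      set m := max (ρ x ^ 2) (ρ x ^ 4)
      have hm : 0 ≤ m := le_max_of_le_left (sq_nonneg _)
      have h2 : c ^ 2 * ρ x ^ 2 ≤ c ^ 2 * m := by gcongr; exact le_max_left _ _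
      have h4 : c ^ 4 * ρ x ^ 4 ≤ c ^ 4 * m := by gcongr; exact le_max_right _ _
      rw [Real.norm_of_nonneg (le_max_of_le_left (sq_nonneg _)), mul_pow, mul_pow]
      exact max_le (by nlinarith [pow_nonneg (sq_nonneg c) 2]) (by nlinarith [sq_nonneg c]))

theorem integrable_taylor_remainder (hf : ContDiff ℝ 2 f) {C : ℝ}
    (hC : ∀ x, ‖fderiv ℝ (fderiv ℝ f) x‖ ≤ C) (a : X) {v : E → X}
    (hv : AEStronglyMeasurable v F) (hρ : Integrable (fun x => ρ x ^ 2) F)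
    (hvρ : ∀ x, ‖v x‖ ≤ ρ x) :
    Integrable (fun x => f (a + v x) - f a - fderiv ℝ f a (v x)) F := by
  have hC0 : 0 ≤ C := (ContinuousLinearMap.opNorm_nonneg _).trans (hC a)
  have hcont : Continuous fun w => f (a + w) - f a - fderiv ℝ f a w :=
    ((hf.continuous.comp (continuous_const_add a)).sub continuous_const).sub
      (fderiv ℝ f a).continuous
  refine (hρ.const_mul C).mono' (hcont.comp_aestronglyMeasurable hv) (.of_forall fun x => ?_)
  calc _ ≤ C * ‖v x‖ ^ 2 := norm_taylor_remainder_le hf hC a (v x)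
    _ ≤ C * ρ x ^ 2 := by gcongr; exact hvρ x

theorem norm_integral_taylor_remainder_sub_le (hf : ContDiff ℝ 3 f) {C₂ C₃ : ℝ}
    (hC₂ : ∀ x, ‖fderiv ℝ (fderiv ℝ f) x‖ ≤ C₂)
    (hC₃ : ∀ x,
      @Norm.norm _ ContinuousLinearMap.hasOpNorm (fderiv ℝ (fderiv ℝ (fderiv ℝ f)) x) ≤ C₃)
    {a b : X} {v w : E → X} (hvm : AEStronglyMeasurable v F) (hwm : AEStronglyMeasurable w F)
    (hρ : Integrable (fun x => ρ x ^ 2) F) (hv : ∀ x, ‖v x‖ ≤ ρ x) (hw : ∀ x, ‖w x‖ ≤ ρ x)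
    (hvw : ∀ x, ‖v x - w x‖ ≤ ρ x * ‖a - b‖) :
    ‖∫ x, (f (a + v x) - f a - fderiv ℝ f a (v x)) ∂F
        - ∫ x, (f (b + w x) - f b - fderiv ℝ f b (w x)) ∂F‖
      ≤ (C₂ + C₃) * (∫ x, ρ x ^ 2 ∂F) * ‖a - b‖ := by
  have hf₂ : ContDiff ℝ 2 f := hf.of_le (by norm_num)
  have hC₂0 : 0 ≤ C₂ := (ContinuousLinearMap.opNorm_nonneg _).trans (hC₂ a)
  have hC₃0 : 0 ≤ C₃ := (ContinuousLinearMap.opNorm_nonneg _).trans (hC₃ a)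
  have hiv := integrable_taylor_remainder hf₂ hC₂ a hvm hρ hv
  have hiw := integrable_taylor_remainder hf₂ hC₂ b hwm hρ hw
  have hle : ∀ x, ‖(f (a + v x) - f a - fderiv ℝ f a (v x))
      - (f (b + w x) - f b - fderiv ℝ f b (w x))‖ ≤ (C₂ + C₃) * ‖a - b‖ * ρ x ^ 2 := fun x => by
    have hρx : 0 ≤ ρ x := (norm_nonneg _).trans (hv x)
    calc _ ≤ C₂ * ρ x * ‖v x - w x‖ + C₃ * ‖w x‖ ^ 2 * ‖a - b‖ :=
          norm_taylor_remainder_sub_taylor_remainder_le hf hC₂ hC₃ (hv x) (hw x)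
      _ ≤ C₂ * ρ x * (ρ x * ‖a - b‖) + C₃ * ρ x ^ 2 * ‖a - b‖ := by
          gcongr
          exacts [hvw x, hw x]
      _ = _ := by ring
  rw [← integral_sub hiv hiw]
  calc _ ≤ ∫ x, ‖(f (a + v x) - f a - fderiv ℝ f a (v x))
        - (f (b + w x) - f b - fderiv ℝ f b (w x))‖ ∂F := norm_integral_le_integral_norm _
    _ ≤ ∫ x, (C₂ + C₃) * ‖a - b‖ * ρ x ^ 2 ∂F :=
        integral_mono (hiv.sub hiw).norm (hρ.const_mul _) hle
    _ = _ := by rw [integral_const_mul]; ring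

end Integral

section LipschitzOnBall

variable {𝕜 X Y Z : Type*} [NontriviallyNormedField 𝕜]
  [NormedAddCommGroup X] [NormedAddCommGroup Y] [NormedAddCommGroup Z] {r : ℝ}

def LipschitzOnBall (f : X → Y) (r L : ℝ) : Prop :=
  ∀ h₁ h₂ : X, ‖h₁‖ ≤ r → ‖h₂‖ ≤ r → ‖f h₁ - f h₂‖ ≤ L * ‖h₁ - h₂‖

theorem LipschitzOnBall.norm_le {f : X → Y} {L : ℝ} (hf : LipschitzOnBall f r L) (hL : 0 ≤ L)
    {h : X} (hh : ‖h‖ ≤ r) : ‖f h‖ ≤ L * r + ‖f 0‖ :=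
  calc ‖f h‖ ≤ ‖f h - f 0‖ + ‖f 0‖ := norm_le_norm_sub_add _ _
    _ ≤ L * ‖h - 0‖ + ‖f 0‖ := by gcongr; exact hf h 0 hh (by simpa using (norm_nonneg h).trans hh)
    _ ≤ L * r + ‖f 0‖ := by rw [sub_zero]; gcongr

theorem LipschitzOnBall.continuousLinearMap_comp [NormedSpace 𝕜 Y] [NormedSpace 𝕜 Z]
    {v : X → Y} {K : ℝ} (hv : LipschitzOnBall v r K) (T : Y →L[𝕜] Z) :
    LipschitzOnBall (fun h => T (v h)) r (‖T‖ * K) :=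
  fun h₁ h₂ hh₁ hh₂ => by
    rw [← map_sub, mul_assoc]
    exact T.le_of_opNorm_le_of_le le_rfl (hv h₁ h₂ hh₁ hh₂)

theorem LipschitzOnBall.clm_apply [NormedSpace 𝕜 Y] [NormedSpace 𝕜 Z] {A : X → Y →L[𝕜] Z}
    {u : X → Y} {LA MA Lu Mu : ℝ}
    (hA : LipschitzOnBall A r LA) (hAb : ∀ h, ‖h‖ ≤ r → ‖A h‖ ≤ MA)
    (hu : LipschitzOnBall u r Lu) (hub : ∀ h, ‖h‖ ≤ r → ‖u h‖ ≤ Mu) :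
    LipschitzOnBall (fun h => A h (u h)) r (LA * Mu + MA * Lu) := fun h₁ h₂ hh₁ hh₂ => by
  have hMA : 0 ≤ MA := (norm_nonneg _).trans (hAb h₁ hh₁)
  have hLA : 0 ≤ LA * ‖h₁ - h₂‖ := (norm_nonneg _).trans (hA h₁ h₂ hh₁ hh₂)
  calc ‖A h₁ (u h₁) - A h₂ (u h₂)‖ ≤ ‖A h₁ - A h₂‖ * ‖u h₁‖ + ‖A h₂‖ * ‖u h₁ - u h₂‖ :=
        (A h₁).norm_apply_sub_apply_le (A h₂) _ _
    _ ≤ LA * ‖h₁ - h₂‖ * Mu + MA * (Lu * ‖h₁ - h₂‖) := by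
        gcongr
        exacts [hA h₁ h₂ hh₁ hh₂, hub h₁ hh₁, hAb h₂ hh₂, hu h₁ h₂ hh₁ hh₂]
    _ = _ := by ring

theorem lipschitzOnBall_comp_add_sub [NormedSpace ℝ X] [NormedSpace ℝ Y] {g : X → Y}
    (hg : ContDiff ℝ 2 g) {C₁ C₂ : ℝ}
    (hC₁ : ∀ h, ‖fderiv ℝ g h‖ ≤ C₁) (hC₂ : ∀ h, ‖fderiv ℝ (fderiv ℝ g) h‖ ≤ C₂)
    {v : X → X} {K : ℝ} (hv : LipschitzOnBall v r K) (hvb : ∀ h, ‖h‖ ≤ r → ‖v h‖ ≤ K) :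
    LipschitzOnBall (fun h => g (h + v h) - g h) r ((C₁ + C₂) * K) := fun h₁ h₂ hh₁ hh₂ => by
  have hC₁0 : 0 ≤ C₁ := (norm_nonneg _).trans (hC₁ 0)
  have hC₂0 : 0 ≤ C₂ := (ContinuousLinearMap.opNorm_nonneg _).trans (hC₂ 0)
  have hg₁ := norm_sub_le_of_hasFDerivAt_of_norm_le
    (fun x => ((hg.differentiable two_ne_zero) x).hasFDerivAt) hC₁ (h₁ + v h₁) (h₁ + v h₂)
  rw [add_sub_add_left_eq_sub] at hg₁
  calc ‖g (h₁ + v h₁) - g h₁ - (g (h₂ + v h₂) - g h₂)‖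
      = ‖(g (h₁ + v h₁) - g (h₁ + v h₂))
          + ((g (h₁ + v h₂) - g h₁) - (g (h₂ + v h₂) - g h₂))‖ := by
        congr 1; abel
    _ ≤ C₁ * ‖v h₁ - v h₂‖ + C₂ * ‖v h₂‖ * ‖h₁ - h₂‖ :=
        (norm_add_le _ _).trans (add_le_add hg₁ (norm_second_difference_le hg hC₂ _ _ _))
    _ ≤ C₁ * (K * ‖h₁ - h₂‖) + C₂ * K * ‖h₁ - h₂‖ := by
        gcongr
        exacts [hv h₁ h₂ hh₁ hh₂, hvb h₂ hh₂]
    _ = _ := by ring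

end LipschitzOnBall

section ItoDrift

variable {X Y E : Type*} [NormedAddCommGroup X] [NormedSpace ℝ X]
  [NormedAddCommGroup Y] [NormedSpace ℝ Y] [MeasurableSpace E]

-- The drift `â` of `g(X)` in Itô's formula.
noncomputable def itoDrift (g : X → Y) (α : X → X) (σ : ℕ → X → X) (γ : X → E → X)
    (F : Measure E) (h : X) : Y :=
  fderiv ℝ g h (α h)
    + (1 / 2 : ℝ) • ∑' j : ℕ, fderiv ℝ (fderiv ℝ g) h (σ j h) (σ j h)
    + ∫ x, (g (h + γ h x) - g h - fderiv ℝ g h (γ h x)) ∂F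

theorem norm_add_smul_add_sub_le {V : Type*} [SeminormedAddCommGroup V] [NormedSpace ℝ V]
    (c : ℝ) (a₁ a₂ b₁ b₂ e₁ e₂ : V) :
    ‖(a₁ + c • b₁ + e₁) - (a₂ + c • b₂ + e₂)‖ ≤ ‖a₁ - a₂‖ + ‖c‖ * ‖b₁ - b₂‖ + ‖e₁ - e₂‖ :=
  calc _ = ‖(a₁ - a₂) + c • (b₁ - b₂) + (e₁ - e₂)‖ := by rw [smul_sub]; congr 1; abel
    _ ≤ _ := (norm_add₃_le).trans (by rw [norm_smul])

theorem lipschitzOnBall_itoDrift [CompleteSpace Y] {g : X → Y} (hg : ContDiff ℝ 3 g)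
    {C₁ C₂ C₃ : ℝ} (hC₁ : ∀ h, ‖fderiv ℝ g h‖ ≤ C₁)
    (hC₂ : ∀ h, ‖fderiv ℝ (fderiv ℝ g) h‖ ≤ C₂)
    (hC₃ : ∀ h,
      @Norm.norm _ ContinuousLinearMap.hasOpNorm (fderiv ℝ (fderiv ℝ (fderiv ℝ g)) h) ≤ C₃)
    {r : ℝ} {α : X → X} {Lα Mα : ℝ} (hα : LipschitzOnBall α r Lα)
    (hαb : ∀ h, ‖h‖ ≤ r → ‖α h‖ ≤ Mα)
    {σ : ℕ → X → X} {κ : ℕ → ℝ} (hκ : Summable fun j => κ j ^ 2)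
    (hσ : ∀ j, LipschitzOnBall (σ j) r (κ j)) (hσb : ∀ j h, ‖h‖ ≤ r → ‖σ j h‖ ≤ κ j)
    {F : Measure E} {γ : X → E → X} (hγm : ∀ h, AEStronglyMeasurable (γ h) F)
    {ρ : E → ℝ} (hρ : Integrable (fun x => ρ x ^ 2) F)
    (hγ : ∀ x, LipschitzOnBall (fun h => γ h x) r (ρ x)) (hγb : ∀ x h, ‖h‖ ≤ r → ‖γ h x‖ ≤ ρ x) :
    LipschitzOnBall (itoDrift g α σ γ F) r (C₂ * Mα + C₁ * Lα
      + (C₃ + 2 * C₂) * (∑' j, κ j ^ 2) / 2 + (C₂ + C₃) * ∫ x, ρ x ^ 2 ∂F) := by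
  intro h₁ h₂ hh₁ hh₂
  have hDg : ContDiff ℝ 2 (fderiv ℝ g) := hg.fderiv_right (by norm_num)
  have hA := LipschitzOnBall.clm_apply
    (fun a b _ _ => norm_fderiv_sub_le (hg.of_le (by norm_num)) hC₂ a b) (fun h _ => hC₁ h)
    hα hαb h₁ h₂ hh₁ hh₂
  have hB := (fderiv ℝ (fderiv ℝ g) h₁).norm_tsum_apply_apply_sub_le (fderiv ℝ (fderiv ℝ g) h₂)
    hκ (fun j => hσb j h₁ hh₁) (fun j => hσb j h₂ hh₂) (fun j => hσ j h₁ h₂ hh₁ hh₂)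
    (norm_fderiv_sub_le hDg hC₃ h₁ h₂) (hC₂ h₂)
  have hI := norm_integral_taylor_remainder_sub_le hg hC₂ hC₃ (hγm h₁) (hγm h₂) hρ
    (fun x => hγb x h₁ hh₁) (fun x => hγb x h₂ hh₂) (fun x => hγ x h₁ h₂ hh₁ hh₂)
  calc _ ≤ _ := norm_add_smul_add_sub_le _ _ _ _ _ _ _
    _ ≤ (C₂ * Mα + C₁ * Lα) * ‖h₁ - h₂‖
        + ‖(1 / 2 : ℝ)‖ * ((C₃ + 2 * C₂) * (∑' j, κ j ^ 2) * ‖h₁ - h₂‖)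
        + (C₂ + C₃) * (∫ x, ρ x ^ 2 ∂F) * ‖h₁ - h₂‖ := by gcongr
    _ = _ := by rw [Real.norm_of_nonneg (by norm_num)]; ring

end ItoDrift

theorem stmt_0_general
    {H G E : Type*}
    [NormedAddCommGroup H] [InnerProductSpace ℝ H]
    [TopologicalSpace.SeparableSpace H] [MeasurableSpace H] [BorelSpace H]
    [NormedAddCommGroup G] [InnerProductSpace ℝ G] [CompleteSpace G]
    [MeasurableSpace E] (F : Measure E)
    (α : H → H) (σ : ℕ → H → H) (γ : H → E → H)
    (hα : ∀ n : ℕ, ∃ L : ℝ, 0 ≤ L ∧ ∀ h₁ h₂ : H, ‖h₁‖ ≤ (n : ℝ) → ‖h₂‖ ≤ (n : ℝ) →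
      ‖α h₁ - α h₂‖ ≤ L * ‖h₁ - h₂‖)
    (hσC1 : ∀ j : ℕ, ContDiff ℝ 1 (σ j))
    (hσ : ∀ n : ℕ, ∃ κ : ℕ → ℝ, (∀ j, 0 ≤ κ j) ∧ Summable (fun j => κ j ^ 2) ∧
      (∀ j : ℕ, ∀ h₁ h₂ : H, ‖h₁‖ ≤ (n : ℝ) → ‖h₂‖ ≤ (n : ℝ) →
        ‖σ j h₁ - σ j h₂‖ ≤ κ j * ‖h₁ - h₂‖) ∧
      (∀ j : ℕ, ∀ h : H, ‖h‖ ≤ (n : ℝ) → ‖σ j h‖ ≤ κ j))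
    (hγmeas : Measurable (Function.uncurry γ))
    (hγ : ∀ n : ℕ, ∃ ρ : E → ℝ, Measurable ρ ∧ (∀ x, 0 ≤ ρ x) ∧
      Integrable (fun x => max (ρ x ^ 2) (ρ x ^ 4)) F ∧
      (∀ x : E, ∀ h₁ h₂ : H, ‖h₁‖ ≤ (n : ℝ) → ‖h₂‖ ≤ (n : ℝ) →
        ‖γ h₁ x - γ h₂ x‖ ≤ ρ x * ‖h₁ - h₂‖) ∧
      (∀ x : E, ∀ h : H, ‖h‖ ≤ (n : ℝ) → ‖γ h x‖ ≤ ρ x))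
    (g : H → G) (hg : ContDiff ℝ 3 g)
    (hg1 : ∃ C : ℝ, ∀ h : H, ‖fderiv ℝ g h‖ ≤ C)
    (hg2 : ∃ C : ℝ, ∀ h : H, ‖fderiv ℝ (fderiv ℝ g) h‖ ≤ C)
    (hg3 : ∃ C : ℝ, ∀ h : H, @Norm.norm _ ContinuousLinearMap.hasOpNorm (fderiv ℝ (fderiv ℝ (fderiv ℝ g)) h) ≤ C)
    (ahat : H → G)
    (hahat : ∀ h : H, ahat h = fderiv ℝ g h (α h)
      + (1 / 2 : ℝ) • ∑' j : ℕ, fderiv ℝ (fderiv ℝ g) h (σ j h) (σ j h)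
      + ∫ x, (g (h + γ h x) - g h - fderiv ℝ g h (γ h x)) ∂F)
    (bhat : ℕ → H → G) (hbhat : ∀ j h, bhat j h = fderiv ℝ g h (σ j h))
    (chat : H → E → G) (hchat : ∀ h x, chat h x = g (h + γ h x) - g h) :
    -- (1) well-definedness of ahat
    (∀ h : H, Summable (fun j : ℕ => ‖fderiv ℝ (fderiv ℝ g) h (σ j h) (σ j h)‖) ∧
      Integrable (fun x => g (h + γ h x) - g h - fderiv ℝ g h (γ h x)) F) ∧
    -- (2) graded Lipschitz estimate for ahat
    (∀ n : ℕ, ∃ L : ℝ, 0 ≤ L ∧ ∀ h₁ h₂ : H, ‖h₁‖ ≤ (n : ℝ) → ‖h₂‖ ≤ (n : ℝ) →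
      ‖ahat h₁ - ahat h₂‖ ≤ L * ‖h₁ - h₂‖) ∧
    -- (3) regularity of bhat
    ((∀ j : ℕ, ContDiff ℝ 1 (bhat j)) ∧
      ∀ n : ℕ, ∃ κ : ℕ → ℝ, (∀ j, 0 ≤ κ j) ∧ Summable (fun j => κ j ^ 2) ∧
        (∀ j : ℕ, ∀ h₁ h₂ : H, ‖h₁‖ ≤ (n : ℝ) → ‖h₂‖ ≤ (n : ℝ) →
          ‖bhat j h₁ - bhat j h₂‖ ≤ κ j * ‖h₁ - h₂‖) ∧
        (∀ j : ℕ, ∀ h : H, ‖h‖ ≤ (n : ℝ) → ‖bhat j h‖ ≤ κ j)) ∧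
    -- (4) regularity of chat
    (∀ n : ℕ, ∃ ρ : E → ℝ, Measurable ρ ∧ (∀ x, 0 ≤ ρ x) ∧
      Integrable (fun x => ρ x ^ 2) F ∧
      (∀ x : E, ∀ h₁ h₂ : H, ‖h₁‖ ≤ (n : ℝ) → ‖h₂‖ ≤ (n : ℝ) →
        ‖chat h₁ x - chat h₂ x‖ ≤ ρ x * ‖h₁ - h₂‖) ∧
      (∀ x : E, ∀ h : H, ‖h‖ ≤ (n : ℝ) → ‖chat h x‖ ≤ ρ x)) ∧
    -- (5) improved integrability when g is linear
    ((∃ T : H →L[ℝ] G, ∀ h, g h = T h) →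
      ∀ n : ℕ, ∃ ρ : E → ℝ, Measurable ρ ∧ (∀ x, 0 ≤ ρ x) ∧
        Integrable (fun x => max (ρ x ^ 2) (ρ x ^ 4)) F ∧
        (∀ x : E, ∀ h₁ h₂ : H, ‖h₁‖ ≤ (n : ℝ) → ‖h₂‖ ≤ (n : ℝ) →
          ‖chat h₁ x - chat h₂ x‖ ≤ ρ x * ‖h₁ - h₂‖) ∧
        (∀ x : E, ∀ h : H, ‖h‖ ≤ (n : ℝ) → ‖chat h x‖ ≤ ρ x)) := by
  have : SecondCountableTopology H := UniformSpace.secondCountable_of_separable H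
  obtain rfl : ahat = itoDrift g α σ γ F := funext hahat
  obtain rfl : bhat = fun j h => fderiv ℝ g h (σ j h) := funext₂ hbhat
  obtain rfl : chat = fun h x => g (h + γ h x) - g h := funext₂ hchat
  obtain ⟨C₁, hC₁⟩ := hg1
  obtain ⟨C₂, hC₂⟩ := hg2
  obtain ⟨C₃, hC₃⟩ := hg3
  have hC₁0 : 0 ≤ C₁ := (norm_nonneg _).trans (hC₁ 0)
  have hC₂0 : 0 ≤ C₂ := (ContinuousLinearMap.opNorm_nonneg _).trans (hC₂ 0)
  have hC₃0 : 0 ≤ C₃ := (ContinuousLinearMap.opNorm_nonneg _).trans (hC₃ 0)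
  have hg₂ : ContDiff ℝ 2 g := hg.of_le (by norm_num)
  have hγm : ∀ h, AEStronglyMeasurable (γ h) F :=
    fun h => (hγmeas.comp measurable_prodMk_left).aestronglyMeasurable
  refine ⟨fun h => ?_, fun n => ?_, ⟨fun j => ?_, fun n => ?_⟩, fun n => ?_, fun ⟨T, hT⟩ n => ?_⟩
  · obtain ⟨κ, -, hκ, -, hσb⟩ := hσ ⌈‖h‖⌉₊
    obtain ⟨ρ, hρm, -, hρ, -, hγb⟩ := hγ ⌈‖h‖⌉₊
    exact ⟨(fderiv ℝ (fderiv ℝ g) h).summable_norm_apply_apply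
        (fun j => hσb j h (Nat.le_ceil _)) hκ,
      integrable_taylor_remainder hg₂ hC₂ h (hγm h) (hρ.sq_of_max_sq_pow_four hρm)
        fun x => hγb x h (Nat.le_ceil _)⟩
  · obtain ⟨Lα, hLα, hα⟩ := hα n
    obtain ⟨κ, -, hκ, hσ, hσb⟩ := hσ n
    obtain ⟨ρ, hρm, -, hρ, hγ, hγb⟩ := hγ n
    have hI : 0 ≤ ∫ x, ρ x ^ 2 ∂F := integral_nonneg fun x => sq_nonneg _
    exact ⟨_, by positivity, lipschitzOnBall_itoDrift hg hC₁ hC₂ hC₃ hα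
      (fun h hh => LipschitzOnBall.norm_le hα hLα hh) hκ hσ hσb hγm
      (hρ.sq_of_max_sq_pow_four hρm) hγ hγb⟩
  · exact (hg.fderiv_right (m := 1) (by norm_num)).clm_apply (hσC1 j)
  · obtain ⟨κ, hκ0, hκ, hσ, hσb⟩ := hσ n
    refine ⟨fun j => C₂ * κ j + C₁ * κ j, fun j => by have := hκ0 j; positivity,
      (hκ.mul_left ((C₁ + C₂) ^ 2)).congr fun j => by ring, fun j => ?_, fun j h hh => ?_⟩
    · exact LipschitzOnBall.clm_apply (fun a b _ _ => norm_fderiv_sub_le hg₂ hC₂ a b)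
        (fun h _ => hC₁ h) (hσ j) (hσb j)
    · exact ((fderiv ℝ g h).le_of_opNorm_le_of_le (hC₁ h) (hσb j h hh)).trans
        (le_add_of_nonneg_left (mul_nonneg hC₂0 (hκ0 j)))
  · obtain ⟨ρ, hρm, hρ0, hρ, hγ, hγb⟩ := hγ n
    refine ⟨fun x => (C₁ + C₂) * ρ x, hρm.const_mul _, fun x => by have := hρ0 x; positivity,
      by simpa only [mul_pow] using (hρ.sq_of_max_sq_pow_four hρm).const_mul ((C₁ + C₂) ^ 2),
      fun x => lipschitzOnBall_comp_add_sub hg₂ hC₁ hC₂ (hγ x) (hγb x), fun x h hh => ?_⟩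
    calc ‖g (h + γ h x) - g h‖ ≤ C₁ * ‖γ h x‖ :=
          norm_comp_add_sub_le (hg.differentiable (by norm_num)) hC₁ h _
      _ ≤ (C₁ + C₂) * ρ x := mul_le_mul (by linarith) (hγb x h hh) (norm_nonneg _) (by linarith)
  · obtain rfl : g = T := funext hT
    obtain ⟨ρ, hρm, hρ0, hρ, hγ, hγb⟩ := hγ n
    refine ⟨fun x => ‖T‖ * ρ x, hρm.const_mul _, fun x => by have := hρ0 x; positivity,
      hρ.max_sq_pow_four_const_mul hρm _, fun x h₁ h₂ hh₁ hh₂ => ?_, fun x h hh => ?_⟩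
    · simpa only [map_add, add_sub_cancel_left] using
        LipschitzOnBall.continuousLinearMap_comp (hγ x) T h₁ h₂ hh₁ hh₂
    · simpa only [map_add, add_sub_cancel_left] using T.le_of_opNorm_le_of_le le_rfl (hγb x h hh)

theorem stmt_0
    {H G E : Type*}
    [NormedAddCommGroup H] [InnerProductSpace ℝ H] [CompleteSpace H]
    [TopologicalSpace.SeparableSpace H] [MeasurableSpace H] [BorelSpace H]
    [NormedAddCommGroup G] [InnerProductSpace ℝ G] [CompleteSpace G]
    [TopologicalSpace.SeparableSpace G]
    [MeasurableSpace E] (F : Measure E) [SigmaFinite F]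
    (α : H → H) (σ : ℕ → H → H) (γ : H → E → H)
    (hα : ∀ n : ℕ, ∃ L : ℝ, 0 ≤ L ∧ ∀ h₁ h₂ : H, ‖h₁‖ ≤ (n : ℝ) → ‖h₂‖ ≤ (n : ℝ) →
      ‖α h₁ - α h₂‖ ≤ L * ‖h₁ - h₂‖)
    (hσC1 : ∀ j : ℕ, ContDiff ℝ 1 (σ j))
    (hσ : ∀ n : ℕ, ∃ κ : ℕ → ℝ, (∀ j, 0 ≤ κ j) ∧ Summable (fun j => κ j ^ 2) ∧
      (∀ j : ℕ, ∀ h₁ h₂ : H, ‖h₁‖ ≤ (n : ℝ) → ‖h₂‖ ≤ (n : ℝ) →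
        ‖σ j h₁ - σ j h₂‖ ≤ κ j * ‖h₁ - h₂‖) ∧
      (∀ j : ℕ, ∀ h : H, ‖h‖ ≤ (n : ℝ) → ‖σ j h‖ ≤ κ j))
    (hγmeas : Measurable (Function.uncurry γ))
    (hγ : ∀ n : ℕ, ∃ ρ : E → ℝ, Measurable ρ ∧ (∀ x, 0 ≤ ρ x) ∧
      Integrable (fun x => max (ρ x ^ 2) (ρ x ^ 4)) F ∧
      (∀ x : E, ∀ h₁ h₂ : H, ‖h₁‖ ≤ (n : ℝ) → ‖h₂‖ ≤ (n : ℝ) →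
        ‖γ h₁ x - γ h₂ x‖ ≤ ρ x * ‖h₁ - h₂‖) ∧
      (∀ x : E, ∀ h : H, ‖h‖ ≤ (n : ℝ) → ‖γ h x‖ ≤ ρ x))
    (g : H → G) (hg : ContDiff ℝ 3 g)
    (hg1 : ∃ C : ℝ, ∀ h : H, ‖fderiv ℝ g h‖ ≤ C)
    (hg2 : ∃ C : ℝ, ∀ h : H, ‖fderiv ℝ (fderiv ℝ g) h‖ ≤ C)
    (hg3 : ∃ C : ℝ, ∀ h : H, @Norm.norm _ ContinuousLinearMap.hasOpNorm (fderiv ℝ (fderiv ℝ (fderiv ℝ g)) h) ≤ C)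
    (ahat : H → G)
    (hahat : ∀ h : H, ahat h = fderiv ℝ g h (α h)
      + (1 / 2 : ℝ) • ∑' j : ℕ, fderiv ℝ (fderiv ℝ g) h (σ j h) (σ j h)
      + ∫ x, (g (h + γ h x) - g h - fderiv ℝ g h (γ h x)) ∂F)
    (bhat : ℕ → H → G) (hbhat : ∀ j h, bhat j h = fderiv ℝ g h (σ j h))
    (chat : H → E → G) (hchat : ∀ h x, chat h x = g (h + γ h x) - g h) :
    -- (1) well-definedness of ahat
    (∀ h : H, Summable (fun j : ℕ => ‖fderiv ℝ (fderiv ℝ g) h (σ j h) (σ j h)‖) ∧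
      Integrable (fun x => g (h + γ h x) - g h - fderiv ℝ g h (γ h x)) F) ∧
    -- (2) graded Lipschitz estimate for ahat
    (∀ n : ℕ, ∃ L : ℝ, 0 ≤ L ∧ ∀ h₁ h₂ : H, ‖h₁‖ ≤ (n : ℝ) → ‖h₂‖ ≤ (n : ℝ) →
      ‖ahat h₁ - ahat h₂‖ ≤ L * ‖h₁ - h₂‖) ∧
    -- (3) regularity of bhat
    ((∀ j : ℕ, ContDiff ℝ 1 (bhat j)) ∧
      ∀ n : ℕ, ∃ κ : ℕ → ℝ, (∀ j, 0 ≤ κ j) ∧ Summable (fun j => κ j ^ 2) ∧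
        (∀ j : ℕ, ∀ h₁ h₂ : H, ‖h₁‖ ≤ (n : ℝ) → ‖h₂‖ ≤ (n : ℝ) →
          ‖bhat j h₁ - bhat j h₂‖ ≤ κ j * ‖h₁ - h₂‖) ∧
        (∀ j : ℕ, ∀ h : H, ‖h‖ ≤ (n : ℝ) → ‖bhat j h‖ ≤ κ j)) ∧
    -- (4) regularity of chat
    (∀ n : ℕ, ∃ ρ : E → ℝ, Measurable ρ ∧ (∀ x, 0 ≤ ρ x) ∧
      Integrable (fun x => ρ x ^ 2) F ∧
      (∀ x : E, ∀ h₁ h₂ : H, ‖h₁‖ ≤ (n : ℝ) → ‖h₂‖ ≤ (n : ℝ) →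
        ‖chat h₁ x - chat h₂ x‖ ≤ ρ x * ‖h₁ - h₂‖) ∧
      (∀ x : E, ∀ h : H, ‖h‖ ≤ (n : ℝ) → ‖chat h x‖ ≤ ρ x)) ∧
    -- (5) improved integrability when g is linear
    ((∃ T : H →L[ℝ] G, ∀ h, g h = T h) →
      ∀ n : ℕ, ∃ ρ : E → ℝ, Measurable ρ ∧ (∀ x, 0 ≤ ρ x) ∧
        Integrable (fun x => max (ρ x ^ 2) (ρ x ^ 4)) F ∧
        (∀ x : E, ∀ h₁ h₂ : H, ‖h₁‖ ≤ (n : ℝ) → ‖h₂‖ ≤ (n : ℝ) →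
          ‖chat h₁ x - chat h₂ x‖ ≤ ρ x * ‖h₁ - h₂‖) ∧
        (∀ x : E, ∀ h : H, ‖h‖ ≤ (n : ℝ) → ‖chat h x‖ ≤ ρ x)) :=
  stmt_0_general F α σ γ hα hσC1 hσ hγmeas hγ g hg hg1 hg2 hg3 ahat hahat bhat hbhat chat hchat
end

section
/- Let σʲ : H → H (j ∈ ℕ) be continuously Fréchet differentiable maps such that for each n ∈ ℕ there is a sequence (κ_nʲ)_{j∈ℕ} of nonnegative reals with ∑_{j∈ℕ} (κ_nʲ)² < ∞ satisfying ‖σʲ(h₁) − σʲ(h₂)‖ ≤ κ_nʲ‖h₁ − h₂‖ for all h₁, h₂ ∈ H with ‖h₁‖, ‖h₂‖ ≤ n, and ‖σʲ(h)‖ ≤ κ_nʲ for all h ∈ H with ‖h‖ ≤ n. Then: (1) for every h ∈ H the series ∑_{j∈ℕ} ‖Dσʲ(h)(σʲ(h))‖ converges; (2) the mapping H → H, h ↦ ∑_{j∈ℕ} Dσʲ(h)(σʲ(h)), is continuous. -/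
/-!
On the open ball of radius `n` each `σʲ` is `κ_nʲ`-Lipschitz, so `‖Dσʲ(h)‖ ≤ κ_nʲ` there, and
together with `‖σʲ(h)‖ ≤ κ_nʲ` this gives `‖Dσʲ(h)(σʲ(h))‖ ≤ (κ_nʲ)²`. These bounds are summable,
so the series converges, and uniformly on the ball (Weierstrass M-test); every term is continuous
because `σʲ` is `C¹`, hence so is the sum on each ball, and every point lies in some ball.
-/

open Metric

section LocalBounds

variable {𝕜 E : Type*} [NontriviallyNormedField 𝕜] [NormedAddCommGroup E] [NormedSpace 𝕜 E]
  {f : E → E} {κ r : ℝ}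

theorem norm_fderiv_le_of_norm_sub_le_of_norm_lt (hκ : 0 ≤ κ)
    (hlip : ∀ x y : E, ‖x‖ ≤ r → ‖y‖ ≤ r → ‖f x - f y‖ ≤ κ * ‖x - y‖)
    {x : E} (hx : ‖x‖ < r) : ‖fderiv 𝕜 f x‖ ≤ κ := by
  have hx_ball : x ∈ ball (0 : E) r := mem_ball_zero_iff.2 hx
  refine norm_fderiv_le_of_lip' 𝕜 hκ ?_
  filter_upwards [closedBall_mem_nhds_of_mem hx_ball] with y hy
  exact hlip y x (mem_closedBall_zero_iff.1 hy) hx.le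

theorem norm_fderiv_apply_self_le_sq
    (hlip : ∀ x y : E, ‖x‖ ≤ r → ‖y‖ ≤ r → ‖f x - f y‖ ≤ κ * ‖x - y‖)
    (hbound : ∀ x : E, ‖x‖ ≤ r → ‖f x‖ ≤ κ)
    {x : E} (hx : ‖x‖ < r) : ‖fderiv 𝕜 f x (f x)‖ ≤ κ ^ 2 := by
  have hfx : ‖f x‖ ≤ κ := hbound x hx.le
  have hκ : 0 ≤ κ := (norm_nonneg _).trans hfx
  calc ‖fderiv 𝕜 f x (f x)‖ ≤ ‖fderiv 𝕜 f x‖ * ‖f x‖ := (fderiv 𝕜 f x).le_opNorm _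
    _ ≤ κ * κ := mul_le_mul (norm_fderiv_le_of_norm_sub_le_of_norm_lt hκ hlip hx) hfx
        (norm_nonneg _) hκ
    _ = κ ^ 2 := (sq κ).symm

end LocalBounds

theorem stmt_1_general
    {H : Type*} [NormedAddCommGroup H] [InnerProductSpace ℝ H] [CompleteSpace H]
    (σ : ℕ → H → H)
    (hσC1 : ∀ j : ℕ, ContDiff ℝ 1 (σ j))
    (hσ : ∀ n : ℕ, ∃ κ : ℕ → ℝ, (∀ j, 0 ≤ κ j) ∧ Summable (fun j => κ j ^ 2) ∧
      (∀ j : ℕ, ∀ h₁ h₂ : H, ‖h₁‖ ≤ (n : ℝ) → ‖h₂‖ ≤ (n : ℝ) →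
        ‖σ j h₁ - σ j h₂‖ ≤ κ j * ‖h₁ - h₂‖) ∧
      (∀ j : ℕ, ∀ h : H, ‖h‖ ≤ (n : ℝ) → ‖σ j h‖ ≤ κ j)) :
    (∀ h : H, Summable (fun j : ℕ => ‖fderiv ℝ (σ j) h (σ j h)‖)) ∧
    Continuous (fun h : H => ∑' j : ℕ, fderiv ℝ (σ j) h (σ j h)) := by
  have hcont (j : ℕ) : Continuous fun h : H => fderiv ℝ (σ j) h (σ j h) :=
    ((hσC1 j).continuous_fderiv one_ne_zero).clm_apply (hσC1 j).continuous
  have hdom (h : H) : ∃ n : ℕ, h ∈ ball (0 : H) n ∧ ∃ κ : ℕ → ℝ, Summable (fun j => κ j ^ 2) ∧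
      ∀ j, ∀ x ∈ ball (0 : H) n, ‖fderiv ℝ (σ j) x (σ j x)‖ ≤ κ j ^ 2 := by
    obtain ⟨n, hn⟩ := exists_nat_gt ‖h‖
    obtain ⟨κ, -, hκ, hlip, hbound⟩ := hσ n
    exact ⟨n, mem_ball_zero_iff.2 hn, κ, hκ, fun j x hx =>
      norm_fderiv_apply_self_le_sq (hlip j) (hbound j) (mem_ball_zero_iff.1 hx)⟩
  refine ⟨fun h => ?_, continuous_iff_continuousAt.2 fun h => ?_⟩
  all_goals obtain ⟨n, hh, κ, hκ, hle⟩ := hdom h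
  · exact Summable.of_nonneg_of_le (fun j => norm_nonneg _) (fun j => hle j h hh) hκ
  · exact (continuousOn_tsum (fun j => (hcont j).continuousOn) hκ hle).continuousAt
      (isOpen_ball.mem_nhds hh)

theorem stmt_1
    {H : Type*} [NormedAddCommGroup H] [InnerProductSpace ℝ H] [CompleteSpace H]
    [TopologicalSpace.SeparableSpace H]
    (σ : ℕ → H → H)
    (hσC1 : ∀ j : ℕ, ContDiff ℝ 1 (σ j))
    (hσ : ∀ n : ℕ, ∃ κ : ℕ → ℝ, (∀ j, 0 ≤ κ j) ∧ Summable (fun j => κ j ^ 2) ∧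
      (∀ j : ℕ, ∀ h₁ h₂ : H, ‖h₁‖ ≤ (n : ℝ) → ‖h₂‖ ≤ (n : ℝ) →
        ‖σ j h₁ - σ j h₂‖ ≤ κ j * ‖h₁ - h₂‖) ∧
      (∀ j : ℕ, ∀ h : H, ‖h‖ ≤ (n : ℝ) → ‖σ j h‖ ≤ κ j)) :
    (∀ h : H, Summable (fun j : ℕ => ‖fderiv ℝ (σ j) h (σ j h)‖)) ∧
    Continuous (fun h : H => ∑' j : ℕ, fderiv ℝ (σ j) h (σ j h)) :=
  stmt_1_general σ hσC1 hσ
end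

section
/- Let m ≥ 1 and k ≥ 1 be integers, let V, W ⊆ ℝ^m_+ be open in ℝ^m_+, and let φ : V → W be a bijection such that both φ and φ⁻¹ are C^k-maps, i.e. there exist an open set Ṽ ⊆ ℝ^m and a C^k map φ̃ : Ṽ → ℝ^m with Ṽ ∩ ℝ^m_+ = V and φ̃ = φ on V, and analogously for φ⁻¹. Then: (1) φ(∂V) = ∂W; (2) for every such C^k extension φ̃ of φ and every y ∈ ∂V one has Dφ̃(y)(ℝ^m_+) ⊆ ℝ^m_+. -/
/-!
If a boundary point `y` of `V` had an interior image `z = φ y`, then `ψ̃` would be a `C¹` map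
near `z` with the differentiable local left inverse `φ̃`; its derivative at `z` is then injective,
hence invertible, and by the inverse function theorem `ψ̃` maps neighbourhoods of `z` onto
neighbourhoods of `y`. Since `ψ̃` maps a neighbourhood of `z` into the half-space, the half-space
would be a neighbourhood of the boundary point `y`, which is absurd. The same argument applies to
`ψ`, giving `φ(∂V) = ∂W`.

For the derivative: the first coordinate of `φ̃` vanishes at `y ∈ ∂V` and is nonnegative on the
half-space near `y`, so `y` is a local minimum of it on the half-space, and by Fermat's rule its
derivative is nonnegative in every direction of the tangent cone of the half-space at `y`.
-/

open Set Filter Topology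

section HalfSpace

variable {E : Type*} [NormedAddCommGroup E] [NormedSpace ℝ E] {ℓ : E →L[ℝ] ℝ}

theorem setOf_nonneg_notMem_nhds (hℓ : ℓ ≠ 0) {y : E} (hy : ℓ y = 0) :
    {x | 0 ≤ ℓ x} ∉ 𝓝 y := by
  obtain ⟨w, hw⟩ : ∃ w, ℓ w ≠ 0 := by simpa [DFunLike.ne_iff] using hℓ
  set v := -(ℓ w)⁻¹ • w
  have hv : ℓ v = -1 := by simp [v, hw]
  have hpath : Tendsto (fun t : ℝ => y + t • v) (𝓝[>] 0) (𝓝 y) := by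
    have : Continuous (fun t : ℝ => y + t • v) := by fun_prop
    simpa using (this.tendsto 0).mono_left nhdsWithin_le_nhds
  intro h
  obtain ⟨t, ht, htpos⟩ := ((hpath.eventually h).and self_mem_nhdsWithin).exists
  simp only [map_add, map_smul, hy, hv, smul_eq_mul] at ht
  linarith [show 0 < t from htpos]

theorem fderiv_apply_nonneg_of_eventually_nonneg {F : Type*} [NormedAddCommGroup F]
    [NormedSpace ℝ F] {μ : F →L[ℝ] ℝ} {f : E → F} {y v : E}
    (hf : DifferentiableAt ℝ f y) (hy : 0 ≤ ℓ y) (hfy : μ (f y) = 0)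
    (hnonneg : ∀ᶠ x in 𝓝[{x | 0 ≤ ℓ x}] y, 0 ≤ μ (f x)) (hv : 0 ≤ ℓ v) :
    0 ≤ μ (fderiv ℝ f y v) := by
  have hmin : IsLocalMinOn (μ ∘ f) {x | 0 ≤ ℓ x} y :=
    hnonneg.mono fun x hx => by simpa [hfy] using hx
  have hcone : v ∈ posTangentConeAt {x | 0 ≤ ℓ x} y := by
    refine mem_posTangentConeAt_of_segment_subset
      ((convex_halfSpace_ge ℓ.isLinear 0).segment_subset hy ?_)
    show 0 ≤ ℓ (y + v)
    rw [map_add]; positivity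
  exact hmin.hasFDerivWithinAt_nonneg (μ.hasFDerivAt.comp y hf.hasFDerivAt).hasFDerivWithinAt hcone

end HalfSpace

theorem HasStrictFDerivAt.map_nhds_eq_of_eventually_leftInverse {𝕜 E : Type*}
    [NontriviallyNormedField 𝕜] [CompleteSpace 𝕜] [NormedAddCommGroup E] [NormedSpace 𝕜 E]
    [FiniteDimensional 𝕜 E] {f g : E → E} {g' : E →L[𝕜] E} {z : E}
    (hg : HasStrictFDerivAt g g' z) (hf : DifferentiableAt 𝕜 f (g z))
    (hfg : ∀ᶠ x in 𝓝 z, f (g x) = x) :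
    map g (𝓝 z) = 𝓝 (g z) := by
  have hcomp : (fderiv 𝕜 f (g z)).comp g' = ContinuousLinearMap.id 𝕜 E :=
    (hf.hasFDerivAt.comp z hg.hasFDerivAt).unique ((hasFDerivAt_id z).congr_of_eventuallyEq hfg)
  have hinj : Function.Injective g' :=
    Function.LeftInverse.injective (g := fderiv 𝕜 f (g z)) fun x => congr($hcomp x)
  have := FiniteDimensional.complete 𝕜 E
  let G := (LinearEquiv.ofInjectiveEndo (g' : E →ₗ[𝕜] E) hinj).toContinuousLinearEquiv
  exact HasStrictFDerivAt.map_nhds_eq_of_equiv (f' := G) hg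

section Boundary

variable {E : Type*} [NormedAddCommGroup E] [NormedSpace ℝ E] [FiniteDimensional ℝ E]
  {ℓ : E →L[ℝ] ℝ}

theorem HasStrictFDerivAt.apply_ne_zero_of_eventually_nonneg (hℓ : ℓ ≠ 0) {f g : E → E}
    {g' : E →L[ℝ] E} {z : E} (hg : HasStrictFDerivAt g g' z) (hf : DifferentiableAt ℝ f (g z))
    (hfg : ∀ᶠ x in 𝓝 z, f (g x) = x) (hnonneg : ∀ᶠ x in 𝓝 z, 0 ≤ ℓ (g x)) :
    ℓ (g z) ≠ 0 := fun h0 =>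
  setOf_nonneg_notMem_nhds hℓ h0 <| by
    rw [← hg.map_nhds_eq_of_eventually_leftInverse hf hfg]
    exact hnonneg

theorem apply_eq_zero_of_eq_zero_of_contDiffOn (hℓ : ℓ ≠ 0) {n : WithTop ℕ∞} (hn : n ≠ 0)
    {V W Vt Wt : Set E} {f g ft gt : E → E}
    (hVt : IsOpen Vt) (hV : Vt ∩ {x | 0 ≤ ℓ x} = V) (hft : ContDiffOn ℝ n ft Vt)
    (hfeq : EqOn ft f V)
    (hWt : IsOpen Wt) (hW : Wt ∩ {x | 0 ≤ ℓ x} = W) (hgt : ContDiffOn ℝ n gt Wt)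
    (hgeq : EqOn gt g W)
    (hf : MapsTo f V W) (hg : MapsTo g W V) (hfg : ∀ z ∈ W, f (g z) = z)
    {y : E} (hy : y ∈ V) (hy0 : ℓ y = 0) (hgf : g (f y) = y) : ℓ (f y) = 0 := by
  subst hV hW
  by_contra hne
  set U := Wt ∩ {x | 0 < ℓ x}
  have hzU : f y ∈ U := ⟨(hf hy).1, (hf hy).2.lt_of_ne' hne⟩
  have hU : U ∈ 𝓝 (f y) := (hWt.inter (isOpen_lt continuous_const ℓ.continuous)).mem_nhds hzU
  have hUW : U ⊆ Wt ∩ {x | 0 ≤ ℓ x} := inter_subset_inter_right _ <| ofPred_subset_ofPred.2 fun _ => le_of_lt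
  have hgtz : gt (f y) = y := (hgeq (hf hy)).trans hgf
  refine ((hgt.contDiffAt (hWt.mem_nhds hzU.1)).hasStrictFDerivAt hn
    |>.apply_ne_zero_of_eventually_nonneg hℓ (f := ft) ?_ ?_ ?_) (by rwa [hgtz])
  · rw [hgtz]
    exact (hft.contDiffAt (hVt.mem_nhds hy.1)).differentiableAt hn
  · filter_upwards [hU] with x hx
    rw [hgeq (hUW hx), hfeq (hg (hUW hx)), hfg x (hUW hx)]
  · filter_upwards [hU] with x hx
    rw [hgeq (hUW hx)]
    exact (hg (hUW hx)).2

end Boundary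

theorem stmt_6_general
    (m k : ℕ) [NeZero m] (hk : 1 ≤ k)
    (V W : Set (EuclideanSpace ℝ (Fin m)))
    (φ ψ : EuclideanSpace ℝ (Fin m) → EuclideanSpace ℝ (Fin m))
    (hφbij : Set.BijOn φ V W)
    (hinv₁ : ∀ y ∈ V, ψ (φ y) = y)
    (hinv₂ : ∀ z ∈ W, φ (ψ z) = z)
    (hφCk : ∃ (Vt : Set (EuclideanSpace ℝ (Fin m)))
        (φt : EuclideanSpace ℝ (Fin m) → EuclideanSpace ℝ (Fin m)),
      IsOpen Vt ∧ Vt ∩ {y : EuclideanSpace ℝ (Fin m) | 0 ≤ y 0} = V ∧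
      ContDiffOn ℝ k φt Vt ∧ Set.EqOn φt φ V)
    (hψCk : ∃ (Wt : Set (EuclideanSpace ℝ (Fin m)))
        (ψt : EuclideanSpace ℝ (Fin m) → EuclideanSpace ℝ (Fin m)),
      IsOpen Wt ∧ Wt ∩ {y : EuclideanSpace ℝ (Fin m) | 0 ≤ y 0} = W ∧
      ContDiffOn ℝ k ψt Wt ∧ Set.EqOn ψt ψ W) :
    -- (1) boundary points are mapped to boundary points
    (φ '' {y ∈ V | y 0 = 0} = {z ∈ W | z 0 = 0}) ∧
    -- (2) the derivative of any C^k extension maps the half-space into itself at boundary points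
    (∀ (Vt : Set (EuclideanSpace ℝ (Fin m)))
        (φt : EuclideanSpace ℝ (Fin m) → EuclideanSpace ℝ (Fin m)),
      IsOpen Vt → Vt ∩ {y : EuclideanSpace ℝ (Fin m) | 0 ≤ y 0} = V →
      ContDiffOn ℝ k φt Vt → Set.EqOn φt φ V →
      ∀ y ∈ V, y 0 = 0 →
        ∀ v : EuclideanSpace ℝ (Fin m), 0 ≤ v 0 → 0 ≤ (fderiv ℝ φt y v) 0) := by
  obtain ⟨Vt, φt, hVt, hV, hφt, hφ⟩ := hφCk
  obtain ⟨Wt, ψt, hWt, hW, hψt, hψ⟩ := hψCk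
  set ℓ := EuclideanSpace.proj (𝕜 := ℝ) (0 : Fin m)
  have hℓ : ℓ ≠ 0 := fun h => by simpa [ℓ] using congr($h (EuclideanSpace.single 0 1))
  have hk0 : (k : WithTop ℕ∞) ≠ 0 := by exact_mod_cast (by omega : k ≠ 0)
  have hψV : MapsTo ψ W V := fun z hz => by
    obtain ⟨y, hy, rfl⟩ := hφbij.surjOn hz
    rwa [hinv₁ y hy]
  have hφ0 : ∀ y ∈ V, y 0 = 0 → φ y 0 = 0 := fun y hy hy0 =>
    apply_eq_zero_of_eq_zero_of_contDiffOn hℓ hk0 hVt hV hφt hφ hWt hW hψt hψ hφbij.mapsTo hψV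
      hinv₂ hy hy0 (hinv₁ y hy)
  have hψ0 : ∀ z ∈ W, z 0 = 0 → ψ z 0 = 0 := fun z hz hz0 =>
    apply_eq_zero_of_eq_zero_of_contDiffOn hℓ hk0 hWt hW hψt hψ hVt hV hφt hφ hψV hφbij.mapsTo
      hinv₁ hz hz0 (hinv₂ z hz)
  refine ⟨?_, fun Vt' φt' hVt' hV' hφt' hφ' y hy hy0 v hv => ?_⟩
  · refine Subset.antisymm ?_ fun z ⟨hz, hz0⟩ => ⟨ψ z, ⟨hψV hz, hψ0 z hz hz0⟩, hinv₂ z hz⟩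
    rintro _ ⟨y, ⟨hy, hy0⟩, rfl⟩
    exact ⟨hφbij.mapsTo hy, hφ0 y hy hy0⟩
  · have hWH : W ⊆ {z | 0 ≤ z 0} := hW ▸ inter_subset_right
    subst hV'
    refine fderiv_apply_nonneg_of_eventually_nonneg (ℓ := ℓ) (μ := ℓ)
      ((hφt'.contDiffAt (hVt'.mem_nhds hy.1)).differentiableAt hk0) hy.2 ?_ ?_ hv
    · simpa [ℓ, hφ' hy] using hφ0 y hy hy0
    · filter_upwards [inter_mem_nhdsWithin _ (hVt'.mem_nhds hy.1)] with x hx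
      rw [hφ' ⟨hx.2, hx.1⟩]
      exact hWH (hφbij.mapsTo ⟨hx.2, hx.1⟩)

theorem stmt_6
    (m k : ℕ) [NeZero m] (hm : 1 ≤ m) (hk : 1 ≤ k)
    (V W : Set (EuclideanSpace ℝ (Fin m)))
    (hV : ∃ Vt : Set (EuclideanSpace ℝ (Fin m)), IsOpen Vt ∧
      Vt ∩ {y : EuclideanSpace ℝ (Fin m) | 0 ≤ y 0} = V)
    (hW : ∃ Wt : Set (EuclideanSpace ℝ (Fin m)), IsOpen Wt ∧
      Wt ∩ {y : EuclideanSpace ℝ (Fin m) | 0 ≤ y 0} = W)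
    (φ ψ : EuclideanSpace ℝ (Fin m) → EuclideanSpace ℝ (Fin m))
    (hφbij : Set.BijOn φ V W)
    (hinv₁ : ∀ y ∈ V, ψ (φ y) = y)
    (hinv₂ : ∀ z ∈ W, φ (ψ z) = z)
    (hφCk : ∃ (Vt : Set (EuclideanSpace ℝ (Fin m)))
        (φt : EuclideanSpace ℝ (Fin m) → EuclideanSpace ℝ (Fin m)),
      IsOpen Vt ∧ Vt ∩ {y : EuclideanSpace ℝ (Fin m) | 0 ≤ y 0} = V ∧
      ContDiffOn ℝ k φt Vt ∧ Set.EqOn φt φ V)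
    (hψCk : ∃ (Wt : Set (EuclideanSpace ℝ (Fin m)))
        (ψt : EuclideanSpace ℝ (Fin m) → EuclideanSpace ℝ (Fin m)),
      IsOpen Wt ∧ Wt ∩ {y : EuclideanSpace ℝ (Fin m) | 0 ≤ y 0} = W ∧
      ContDiffOn ℝ k ψt Wt ∧ Set.EqOn ψt ψ W) :
    -- (1) boundary points are mapped to boundary points
    (φ '' {y ∈ V | y 0 = 0} = {z ∈ W | z 0 = 0}) ∧
    -- (2) the derivative of any C^k extension maps the half-space into itself at boundary points
    (∀ (Vt : Set (EuclideanSpace ℝ (Fin m)))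
        (φt : EuclideanSpace ℝ (Fin m) → EuclideanSpace ℝ (Fin m)),
      IsOpen Vt → Vt ∩ {y : EuclideanSpace ℝ (Fin m) | 0 ≤ y 0} = V →
      ContDiffOn ℝ k φt Vt → Set.EqOn φt φ V →
      ∀ y ∈ V, y 0 = 0 →
        ∀ v : EuclideanSpace ℝ (Fin m), 0 ≤ v 0 → 0 ≤ (fderiv ℝ φt y v) 0) :=
  stmt_6_general m k hk V W φ ψ hφbij hinv₁ hinv₂ hφCk hψCk
end

section
/- Let H and G be real Hilbert spaces, m ≥ 1, let T : ℝ^m → H and S : ℝ^m → G be injective continuous linear maps, let η be the inward pointing normal vector associated with T, and let ξ be the inward pointing normal vector associated with S. Then there exists a unique λ > 0 such that ⟨ξ, S v⟩_G = λ·⟨η, T v⟩_H for all v ∈ ℝ^m. -/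
/-! A functional vanishing on the hyperplane `{v | v 0 = 0}` is determined by its value on the
first basis vector `e`: with `a = ⟪η, T e⟫` and `b = ⟪ξ, S e⟫` we get `⟪η, T v⟫ = v 0 * a` and
`⟪ξ, S v⟫ = v 0 * b`. Testing the first identity at a preimage `w` of `η` with `w 0 ≥ 0` gives
`w 0 * a = ‖η‖² = 1`, hence `a > 0`; likewise `b > 0`, and `λ = b / a` is the unique admissible
constant, as one sees by evaluating at `e`. -/

open scoped InnerProductSpace

namespace EuclideanSpace

variable {ι : Type*} [DecidableEq ι]

theorem eq_apply_mul_of_forall_apply_eq_zero (f : EuclideanSpace ℝ ι →L[ℝ] ℝ) (i : ι)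
    (hf : ∀ v : EuclideanSpace ℝ ι, v i = 0 → f v = 0) (v : EuclideanSpace ℝ ι) :
    f v = v i * f (single i 1) := by
  have h := hf (v - v i • single i 1) (by simp)
  rwa [map_sub, map_smul, sub_eq_zero, smul_eq_mul] at h

variable {H : Type*} [NormedAddCommGroup H] [InnerProductSpace ℝ H]

theorem inner_apply_eq_apply_mul_of_forall_apply_eq_zero (T : EuclideanSpace ℝ ι →L[ℝ] H)
    (i : ι) {η : H} (hη : ∀ v : EuclideanSpace ℝ ι, v i = 0 → ⟪η, T v⟫_ℝ = 0)
    (v : EuclideanSpace ℝ ι) :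
    ⟪η, T v⟫_ℝ = v i * ⟪η, T (single i 1)⟫_ℝ :=
  eq_apply_mul_of_forall_apply_eq_zero (innerSL ℝ η ∘L T) i hη v

theorem inner_apply_single_pos_of_mem_image_halfSpace (T : EuclideanSpace ℝ ι →L[ℝ] H)
    (i : ι) {η : H} (hη_mem : η ∈ ⇑T '' {y : EuclideanSpace ℝ ι | 0 ≤ y i}) (hη_norm : ‖η‖ = 1)
    (hη : ∀ v : EuclideanSpace ℝ ι, v i = 0 → ⟪η, T v⟫_ℝ = 0) :
    0 < ⟪η, T (single i 1)⟫_ℝ := by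
  obtain ⟨w, hw, rfl⟩ := hη_mem
  have h := inner_apply_eq_apply_mul_of_forall_apply_eq_zero T i hη w
  rw [real_inner_self_eq_norm_sq, hη_norm] at h
  exact pos_of_mul_pos_right (by linarith) hw

end EuclideanSpace

open EuclideanSpace in
theorem stmt_9_general
    {H G : Type*} [NormedAddCommGroup H] [InnerProductSpace ℝ H]
    [NormedAddCommGroup G] [InnerProductSpace ℝ G]
    (m : ℕ) [NeZero m]
    (T : EuclideanSpace ℝ (Fin m) →L[ℝ] H)
    (S : EuclideanSpace ℝ (Fin m) →L[ℝ] G)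
    (η : H)
    (hη₁ : η ∈ ⇑T '' {y : EuclideanSpace ℝ (Fin m) | 0 ≤ y 0})
    (hη₂ : ‖η‖ = 1)
    (hη₃ : ∀ v : EuclideanSpace ℝ (Fin m), v 0 = 0 → ⟪η, T v⟫_ℝ = 0)
    (ξ : G)
    (hξ₁ : ξ ∈ ⇑S '' {y : EuclideanSpace ℝ (Fin m) | 0 ≤ y 0})
    (hξ₂ : ‖ξ‖ = 1)
    (hξ₃ : ∀ v : EuclideanSpace ℝ (Fin m), v 0 = 0 → ⟪ξ, S v⟫_ℝ = 0) :
    ∃! l : ℝ, 0 < l ∧ ∀ v : EuclideanSpace ℝ (Fin m), ⟪ξ, S v⟫_ℝ = l * ⟪η, T v⟫_ℝ := by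
  have hT := inner_apply_eq_apply_mul_of_forall_apply_eq_zero T 0 hη₃
  have hS := inner_apply_eq_apply_mul_of_forall_apply_eq_zero S 0 hξ₃
  have ha := inner_apply_single_pos_of_mem_image_halfSpace T 0 hη₁ hη₂ hη₃
  have hb := inner_apply_single_pos_of_mem_image_halfSpace S 0 hξ₁ hξ₂ hξ₃
  refine ⟨⟪ξ, S (single 0 1)⟫_ℝ / ⟪η, T (single 0 1)⟫_ℝ, ⟨div_pos hb ha, fun v => ?_⟩,
    fun l hl => ?_⟩
  · rw [hS v, hT v]
    field_simp
  · have h := hl.2 (single 0 1)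
    rw [eq_div_iff ha.ne', h]

theorem stmt_9
    {H G : Type*} [NormedAddCommGroup H] [InnerProductSpace ℝ H]
    [NormedAddCommGroup G] [InnerProductSpace ℝ G]
    (m : ℕ) [NeZero m] (hm : 1 ≤ m)
    (T : EuclideanSpace ℝ (Fin m) →L[ℝ] H) (hT : Function.Injective T)
    (S : EuclideanSpace ℝ (Fin m) →L[ℝ] G) (hS : Function.Injective S)
    (η : H)
    (hη₁ : η ∈ ⇑T '' {y : EuclideanSpace ℝ (Fin m) | 0 ≤ y 0})
    (hη₂ : ‖η‖ = 1)
    (hη₃ : ∀ v : EuclideanSpace ℝ (Fin m), v 0 = 0 → ⟪η, T v⟫_ℝ = 0)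
    (ξ : G)
    (hξ₁ : ξ ∈ ⇑S '' {y : EuclideanSpace ℝ (Fin m) | 0 ≤ y 0})
    (hξ₂ : ‖ξ‖ = 1)
    (hξ₃ : ∀ v : EuclideanSpace ℝ (Fin m), v 0 = 0 → ⟪ξ, S v⟫_ℝ = 0) :
    ∃! l : ℝ, 0 < l ∧ ∀ v : EuclideanSpace ℝ (Fin m), ⟪ξ, S v⟫_ℝ = l * ⟪η, T v⟫_ℝ :=
  stmt_9_general m T S η hη₁ hη₂ hη₃ ξ hξ₁ hξ₂ hξ₃
end

section
/- Let H be a real separable Hilbert space, let M ⊆ H be nonempty, let h₀ ∈ M, and suppose there exist an open set U ⊆ H with h₀ ∈ U, an integer m ≥ 1, a set V ⊆ ℝ^m_+ open in ℝ^m_+, and a homeomorphism φ : V → U ∩ M. Then there exists ε₀ > 0 such that for every 0 ≤ ε ≤ ε₀: (1) the set {h ∈ M : ‖h − h₀‖ ≤ ε} is compact; (2) {h ∈ closure(M) : ‖h − h₀‖ < ε} ⊆ {h ∈ M : ‖h − h₀‖ ≤ ε}. -/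
theorem stmt_10
    {H : Type*} [NormedAddCommGroup H] [InnerProductSpace ℝ H] [CompleteSpace H]
    [TopologicalSpace.SeparableSpace H]
    (M : Set H) (hMne : M.Nonempty) (h₀ : H) (hh₀ : h₀ ∈ M)
    (U : Set H) (hU : IsOpen U) (hh₀U : h₀ ∈ U)
    (m : ℕ) [NeZero m] (hm : 1 ≤ m)
    (V : Set (EuclideanSpace ℝ (Fin m)))
    (hV : ∃ Vt : Set (EuclideanSpace ℝ (Fin m)), IsOpen Vt ∧
      Vt ∩ {y : EuclideanSpace ℝ (Fin m) | 0 ≤ y 0} = V)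
    (φ : EuclideanSpace ℝ (Fin m) → H)
    (hφbij : Set.BijOn φ V (U ∩ M))
    (hφcont : ContinuousOn φ V)
    (hφinv : ∃ ψ : H → EuclideanSpace ℝ (Fin m),
      ContinuousOn ψ (U ∩ M) ∧ ∀ y ∈ V, ψ (φ y) = y) :
    ∃ ε₀ : ℝ, 0 < ε₀ ∧ ∀ ε : ℝ, 0 ≤ ε → ε ≤ ε₀ →
      IsCompact {h ∈ M | ‖h - h₀‖ ≤ ε} ∧
      {h ∈ closure M | ‖h - h₀‖ < ε} ⊆ {h ∈ M | ‖h - h₀‖ ≤ ε} := by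
  obtain ⟨Vt, hVtopen, hVteq⟩ := hV
  obtain ⟨ψ, hψcont, hψinv⟩ := hφinv
  -- y₀ : preimage of h₀
  obtain ⟨y₀, hy₀V, hy₀⟩ := hφbij.surjOn ⟨hh₀U, hh₀⟩
  have hy₀Vt : y₀ ∈ Vt := by rw [← hVteq] at hy₀V; exact hy₀V.1
  -- r : ball y₀ r ⊆ Vt
  obtain ⟨r, hr, hrball⟩ := Metric.isOpen_iff.mp hVtopen y₀ hy₀Vt
  -- compact set C in V
  set C : Set (EuclideanSpace ℝ (Fin m)) :=
    Metric.closedBall y₀ (r/2) ∩ {y | 0 ≤ y 0} with hC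
  have hhalf_closed : IsClosed {y : EuclideanSpace ℝ (Fin m) | 0 ≤ y 0} :=
    isClosed_le continuous_const (EuclideanSpace.proj (0 : Fin m)).continuous
  have hCcomp : IsCompact C :=
    (isCompact_closedBall y₀ (r/2)).inter_right hhalf_closed
  have hCV : C ⊆ V := by
    intro y hy
    rw [← hVteq]
    exact ⟨hrball (Metric.mem_ball.mpr (lt_of_le_of_lt (Metric.mem_closedBall.mp hy.1) (by linarith))), hy.2⟩
  set K : Set H := φ '' C with hK
  have hKcomp : IsCompact K := hCcomp.image_of_continuousOn (hφcont.mono hCV)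
  have hKM : K ⊆ M := by
    rintro _ ⟨y, hy, rfl⟩
    exact (hφbij.mapsTo (hCV hy)).2
  -- δ₁ : ball h₀ δ₁ ⊆ U
  obtain ⟨δ₁, hδ₁, hδ₁U⟩ := Metric.isOpen_iff.mp hU h₀ hh₀U
  -- δ₂ : continuity of ψ at h₀
  have hψat : ContinuousWithinAt ψ (U ∩ M) h₀ := hψcont h₀ ⟨hh₀U, hh₀⟩
  rw [Metric.continuousWithinAt_iff] at hψat
  obtain ⟨δ₂, hδ₂, hδ₂ψ⟩ := hψat (r/2) (by linarith)
  refine ⟨min δ₁ δ₂ / 2, by positivity, fun ε hε0 hεle => ?_⟩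
  have hεδ₁ : ε < δ₁ := lt_of_le_of_lt hεle (by
    have := min_le_left δ₁ δ₂; linarith)
  have hεδ₂ : ε < δ₂ := lt_of_le_of_lt hεle (by
    have := min_le_right δ₁ δ₂; linarith)
  -- key : the ε-ball in M lies in K
  have hkey : {h ∈ M | ‖h - h₀‖ ≤ ε} ⊆ K := by
    rintro h ⟨hhM, hhε⟩
    have hdist : dist h h₀ < δ₁ := by rw [dist_eq_norm]; linarith
    have hhU : h ∈ U := hδ₁U hdist
    have hψh : dist (ψ h) (ψ h₀) < r / 2 := by
      refine hδ₂ψ ⟨hhU, hhM⟩ ?_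
      rw [dist_eq_norm]; linarith
    have hψh₀ : ψ h₀ = y₀ := by rw [← hy₀]; exact hψinv y₀ hy₀V
    -- h = φ y for y ∈ V
    obtain ⟨y, hyV, rfl⟩ := hφbij.surjOn ⟨hhU, hhM⟩
    have hyhalf : 0 ≤ y 0 := by rw [← hVteq] at hyV; exact hyV.2
    have hψy : ψ (φ y) = y := hψinv y hyV
    refine ⟨y, ⟨?_, hyhalf⟩, rfl⟩
    rw [Metric.mem_closedBall]
    rw [hψy, hψh₀] at hψh
    exact hψh.le
  constructor
  · have : {h ∈ M | ‖h - h₀‖ ≤ ε} = K ∩ Metric.closedBall h₀ ε := by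
      ext h
      simp only [Set.mem_setOf_eq, Set.mem_inter_iff, Metric.mem_closedBall,
        dist_eq_norm]
      constructor
      · intro hh; exact ⟨hkey ⟨hh.1, hh.2⟩, hh.2⟩
      · intro hh; exact ⟨hKM hh.1, hh.2⟩
    rw [this]
    exact hKcomp.inter_right Metric.isClosed_closedBall
  · rintro h ⟨hhcl, hhε⟩
    have hηpos : 0 < ε - ‖h - h₀‖ := by linarith
    have hsub : Metric.ball h (ε - ‖h - h₀‖) ∩ M ⊆ K := by
      rintro p ⟨hpb, hpM⟩
      refine hkey ⟨hpM, ?_⟩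
      have := Metric.mem_ball.mp hpb
      rw [dist_eq_norm] at this
      have h3 : ‖p - h₀‖ ≤ ‖p - h‖ + ‖h - h₀‖ := norm_sub_le_norm_sub_add_norm_sub p h h₀
      linarith
    have hhK : h ∈ K := by
      have h1 : h ∈ closure (Metric.ball h (ε - ‖h - h₀‖) ∩ M) :=
        Metric.isOpen_ball.inter_closure ⟨Metric.mem_ball_self hηpos, hhcl⟩
      have h2 : closure (Metric.ball h (ε - ‖h - h₀‖) ∩ M) ⊆ K := by
        rw [← hKcomp.isClosed.closure_eq]
        exact closure_mono hsub
      exact h2 h1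
    exact ⟨hKM hhK, hhε.le⟩
end

section
/- Let γ : H × E → H satisfy the γ-regularity conditions, let M ⊆ H be nonempty and h₀ ∈ M, and assume: (a) there is ε₀ > 0 such that for every 0 < ε ≤ ε₀ the set {h ∈ M : ‖h − h₀‖ ≤ ε} is compact and {h ∈ closure(M) : ‖h − h₀‖ < ε} ⊆ {h ∈ M : ‖h − h₀‖ ≤ ε}; (b) there is an open neighborhood U of h₀ such that for every h ∈ U ∩ M one has h + γ(h,x) ∈ closure(M) for F-almost all x ∈ E. Then for every 0 < ε ≤ ε₀ there exist 0 < δ < ε and B ∈ ℰ with F(E ∖ B) < ∞ such that for every h ∈ M with ‖h − h₀‖ < δ one has h + γ(h,x) ∈ {g ∈ M : ‖g − h₀‖ ≤ ε} for F-almost all x ∈ B; i.e., γ satisfies the ε–δ–jump condition in h₀. -/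
open MeasureTheory
open scoped ENNReal

theorem stmt_11
    {H E : Type*}
    [NormedAddCommGroup H] [InnerProductSpace ℝ H] [CompleteSpace H]
    [TopologicalSpace.SeparableSpace H] [MeasurableSpace H] [BorelSpace H]
    [MeasurableSpace E] (F : Measure E) [SigmaFinite F]
    (γ : H → E → H) (hγmeas : Measurable (Function.uncurry γ))
    (ρ : ℕ → E → ℝ)
    (hρmeas : ∀ n, Measurable (ρ n))
    (hρnonneg : ∀ n x, 0 ≤ ρ n x)
    (hρint : ∀ n, Integrable (fun x => ρ n x ^ 2) F)
    (hγLip : ∀ n : ℕ, ∀ x : E, ∀ h₁ h₂ : H, ‖h₁‖ ≤ (n : ℝ) → ‖h₂‖ ≤ (n : ℝ) →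
      ‖γ h₁ x - γ h₂ x‖ ≤ ρ n x * ‖h₁ - h₂‖)
    (hγbd : ∀ n : ℕ, ∀ x : E, ∀ h : H, ‖h‖ ≤ (n : ℝ) → ‖γ h x‖ ≤ ρ n x)
    (M : Set H) (hMne : M.Nonempty) (h₀ : H) (hh₀ : h₀ ∈ M)
    (ε₀ : ℝ) (hε₀ : 0 < ε₀)
    (hloc : ∀ ε : ℝ, 0 < ε → ε ≤ ε₀ →
      IsCompact {h ∈ M | ‖h - h₀‖ ≤ ε} ∧
      {h ∈ closure M | ‖h - h₀‖ < ε} ⊆ {h ∈ M | ‖h - h₀‖ ≤ ε})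
    (U : Set H) (hU : IsOpen U) (hh₀U : h₀ ∈ U)
    (hjump : ∀ h ∈ U ∩ M, ∀ᵐ x ∂F, h + γ h x ∈ closure M) :
    ∀ ε : ℝ, 0 < ε → ε ≤ ε₀ →
      ∃ δ : ℝ, 0 < δ ∧ δ < ε ∧ ∃ B : Set E, MeasurableSet B ∧ F Bᶜ < ⊤ ∧
        ∀ h ∈ M, ‖h - h₀‖ < δ →
          ∀ᵐ x ∂F, x ∈ B → h + γ h x ∈ {g ∈ M | ‖g - h₀‖ ≤ ε} := by
  intro ε hε hεε₀
  obtain ⟨r, hr, hrU⟩ := Metric.isOpen_iff.mp hU h₀ hh₀U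
  set n : ℕ := ⌈‖h₀‖ + ε₀⌉₊ with hn
  set δ : ℝ := min (ε / 3) (r / 2) with hδdef
  have hδpos : 0 < δ := lt_min (by linarith) (by linarith)
  have hδε : δ < ε := lt_of_le_of_lt (min_le_left _ _) (by linarith)
  refine ⟨δ, hδpos, hδε, {x | ρ n x ≤ ε / 3}, measurableSet_le (hρmeas n) measurable_const, ?_, ?_⟩
  · have hsub : {x | ρ n x ≤ ε / 3}ᶜ ⊆ {x | (ε / 3) ^ 2 ≤ ρ n x ^ 2} := by
      intro x hx
      simp only [Set.mem_compl_iff, Set.mem_setOf_eq, not_le] at hx ⊢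
      exact pow_le_pow_left₀ (by linarith) hx.le 2
    calc F {x | ρ n x ≤ ε / 3}ᶜ ≤ F {x | (ε / 3) ^ 2 ≤ ρ n x ^ 2} :=
          measure_mono hsub
      _ < ⊤ := (hρint n).measure_ge_lt_top (by positivity)
  · intro h hhM hhδ
    have hhU : h ∈ U := hrU (by
      simp only [Metric.mem_ball, dist_eq_norm]
      calc ‖h - h₀‖ < δ := hhδ
        _ ≤ r / 2 := min_le_right _ _
        _ < r := by linarith)
    have hhn : ‖h‖ ≤ (n : ℝ) := by
      have : ‖h‖ ≤ ‖h₀‖ + ε₀ := by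
        have := norm_sub_norm_le h h₀
        have hδε₀ : δ ≤ ε₀ := le_trans hδε.le hεε₀
        linarith [hhδ.le.trans hδε₀]
      exact this.trans (Nat.le_ceil _)
    filter_upwards [hjump h ⟨hhU, hhM⟩] with x hx hxB
    have hbd : ‖γ h x‖ ≤ ε / 3 := (hγbd n x h hhn).trans hxB
    have hnear : ‖h + γ h x - h₀‖ < ε := by
      have h1 : ‖h + γ h x - h₀‖ ≤ ‖h - h₀‖ + ‖γ h x‖ := by
        have : h + γ h x - h₀ = (h - h₀) + γ h x := by abel
        rw [this]; exact norm_add_le _ _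
      have h2 : ‖h - h₀‖ < ε / 3 := lt_of_lt_of_le hhδ (min_le_left _ _)
      linarith
    exact (hloc ε hε hεε₀).2 ⟨hx, hnear⟩
end

section
/- Let γ : H × E → H satisfy the γ-regularity conditions, let M ⊆ H be nonempty and h₀ ∈ M. Suppose there are an open set U ⊆ H with h₀ ∈ U, an integer m ≥ 1, a set V ⊆ ℝ^m_+ open in ℝ^m_+, and a homeomorphism φ : V → U ∩ M which is the restriction of a twice continuously Fréchet differentiable map φ : ℝ^m → H with bounded first and second derivatives, such that φ⁻¹ extends to a continuously Fréchet differentiable map Φ : H → ℝ^m with bounded derivative (so Φ(φ(y)) = y for y ∈ V and φ(Φ(h)) = h for h ∈ U ∩ M). Assume there exist δ₀ > 0 and B₀ ∈ ℰ with F(E ∖ B₀) < ∞ such that for every h ∈ M with ‖h − h₀‖ < δ₀ one has h + γ(h,x) ∈ U ∩ M for F-almost all x ∈ B₀. Then there exist δ > 0, a set B ∈ ℰ with F(E ∖ B) < ∞ and a measurable ρ : E → [0,∞) with ∫_E ρ(x)² F(dx) < ∞ such that for every h ∈ M with ‖h − h₀‖ < δ, writing y := Φ(h), one has ‖γ(h,x)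 − Dφ(y)(Φ(h + γ(h,x)) − Φ(h))‖ ≤ ρ(x)² for F-almost all x ∈ B. -/
open MeasureTheory

/-!
Write `a = Φ h` and `b = Φ (h + γ h x)`. Since `φ` inverts `Φ` on `U ∩ M`, the jump `γ h x` equals
`φ b - φ a`, so the quantity to be bounded is the second-order Taylor remainder of `φ` at `a`. The
bounded second derivative makes it at most `C₂ ‖b - a‖²`, and the bounded derivative of `Φ` gives
`‖b - a‖ ≤ C_Φ ‖γ h x‖ ≤ C_Φ ρₙ(x)` once `‖h‖ ≤ n`, which holds near `h₀`. Hence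
`ρ' = √C₂ · C_Φ · ρₙ` works, with `B = B₀` and `δ` small enough that `h` stays in `U`.
-/

section Taylor

variable {X Y : Type*} [NormedAddCommGroup X] [NormedSpace ℝ X]
  [NormedAddCommGroup Y] [NormedSpace ℝ Y]

theorem norm_sub_le_of_differentiable_of_norm_fderiv_le {f : X → Y} (hf : Differentiable ℝ f)
    {C : ℝ} (hC : ∀ z, ‖fderiv ℝ f z‖ ≤ C) (a b : X) :
    ‖f b - f a‖ ≤ C * ‖b - a‖ :=
  convex_univ.norm_image_sub_le_of_norm_fderiv_le (fun z _ => hf z) (fun z _ => hC z)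
    (Set.mem_univ a) (Set.mem_univ b)

theorem norm_taylor_remainder_le_of_norm_fderiv_fderiv_le {f : X → Y} (hf : ContDiff ℝ 2 f)
    {C : ℝ} (hC : ∀ z, ‖fderiv ℝ (fderiv ℝ f) z‖ ≤ C) (a b : X) :
    ‖f b - f a - fderiv ℝ f a (b - a)‖ ≤ C * ‖b - a‖ ^ 2 := by
  have hC0 : 0 ≤ C := (ContinuousLinearMap.opNorm_nonneg _).trans (hC a)
  have hf' : Differentiable ℝ (fderiv ℝ f) :=
    (hf.fderiv_right (m := 1) (by norm_num)).differentiable one_ne_zero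
  have hbound : ∀ z ∈ segment ℝ a b, ‖fderiv ℝ f z - fderiv ℝ f a‖ ≤ C * ‖b - a‖ := fun z hz =>
    calc ‖fderiv ℝ f z - fderiv ℝ f a‖ ≤ C * ‖z - a‖ :=
          norm_sub_le_of_differentiable_of_norm_fderiv_le hf' hC a z
      _ ≤ C * ‖b - a‖ := mul_le_mul_of_nonneg_left (norm_sub_le_of_mem_segment hz) hC0
  calc ‖f b - f a - fderiv ℝ f a (b - a)‖ ≤ C * ‖b - a‖ * ‖b - a‖ :=
        (convex_segment a b).norm_image_sub_le_of_norm_fderiv_le'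
          (fun z _ => (hf.differentiable two_ne_zero) z) hbound
          (left_mem_segment ℝ a b) (right_mem_segment ℝ a b)
    _ = C * ‖b - a‖ ^ 2 := by ring

theorem norm_sub_sub_fderiv_apply_le {φ : X → Y} {Φ : Y → X} (hφ : ContDiff ℝ 2 φ) {C₂ : ℝ}
    (hC₂ : ∀ z, ‖fderiv ℝ (fderiv ℝ φ) z‖ ≤ C₂) (hΦ : Differentiable ℝ Φ) {C : ℝ}
    (hC : ∀ h, ‖fderiv ℝ Φ h‖ ≤ C) {h h' : Y} (hh : φ (Φ h) = h) (hh' : φ (Φ h') = h') :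
    ‖h' - h - fderiv ℝ φ (Φ h) (Φ h' - Φ h)‖ ≤ C₂ * C ^ 2 * ‖h' - h‖ ^ 2 := by
  have hC₂0 : 0 ≤ C₂ := (ContinuousLinearMap.opNorm_nonneg _).trans (hC₂ 0)
  have hΦlip : ‖Φ h' - Φ h‖ ≤ C * ‖h' - h‖ :=
    norm_sub_le_of_differentiable_of_norm_fderiv_le hΦ hC h h'
  calc ‖h' - h - fderiv ℝ φ (Φ h) (Φ h' - Φ h)‖
      = ‖φ (Φ h') - φ (Φ h) - fderiv ℝ φ (Φ h) (Φ h' - Φ h)‖ := by rw [hh, hh']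
    _ ≤ C₂ * ‖Φ h' - Φ h‖ ^ 2 := norm_taylor_remainder_le_of_norm_fderiv_fderiv_le hφ hC₂ _ _
    _ ≤ C₂ * (C * ‖h' - h‖) ^ 2 := by gcongr
    _ = C₂ * C ^ 2 * ‖h' - h‖ ^ 2 := by ring

end Taylor

theorem stmt_12_general
    {H E : Type*}
    [NormedAddCommGroup H] [InnerProductSpace ℝ H]
    [MeasurableSpace E] (F : Measure E)
    (γ : H → E → H)
    (ρ : ℕ → E → ℝ)
    (hρmeas : ∀ n, Measurable (ρ n))
    (hρnonneg : ∀ n x, 0 ≤ ρ n x)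
    (hρint : ∀ n, Integrable (fun x => ρ n x ^ 2) F)
    (hγbd : ∀ n : ℕ, ∀ x : E, ∀ h : H, ‖h‖ ≤ (n : ℝ) → ‖γ h x‖ ≤ ρ n x)
    (M : Set H) (h₀ : H)
    (U : Set H) (hU : IsOpen U) (hh₀U : h₀ ∈ U)
    (m : ℕ)
    (φ : EuclideanSpace ℝ (Fin m) → H)
    (hφC2 : ContDiff ℝ 2 φ)
    (hφbd2 : ∃ C : ℝ, ∀ y, ‖fderiv ℝ (fderiv ℝ φ) y‖ ≤ C)
    (Φ : H → EuclideanSpace ℝ (Fin m))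
    (hΦC1 : ContDiff ℝ 1 Φ)
    (hΦbd : ∃ C : ℝ, ∀ h, ‖fderiv ℝ Φ h‖ ≤ C)
    (hφΦ : ∀ h ∈ U ∩ M, φ (Φ h) = h)
    (δ₀ : ℝ) (hδ₀ : 0 < δ₀)
    (B₀ : Set E) (hB₀ : MeasurableSet B₀) (hB₀fin : F B₀ᶜ < ⊤)
    (hjump : ∀ h ∈ M, ‖h - h₀‖ < δ₀ → ∀ᵐ x ∂F, x ∈ B₀ → h + γ h x ∈ U ∩ M) :
    ∃ δ : ℝ, 0 < δ ∧ ∃ B : Set E, MeasurableSet B ∧ F Bᶜ < ⊤ ∧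
      ∃ ρ' : E → ℝ, Measurable ρ' ∧ (∀ x, 0 ≤ ρ' x) ∧
        Integrable (fun x => ρ' x ^ 2) F ∧
        ∀ h ∈ M, ‖h - h₀‖ < δ →
          ∀ᵐ x ∂F, x ∈ B →
            ‖γ h x - fderiv ℝ φ (Φ h) (Φ (h + γ h x) - Φ h)‖ ≤ ρ' x ^ 2 := by
  obtain ⟨C₂, hC₂⟩ := hφbd2
  obtain ⟨C, hC⟩ := hΦbd
  obtain ⟨ε, hε, hballU⟩ := Metric.isOpen_iff.1 hU h₀ hh₀U
  have hC₂0 : 0 ≤ C₂ := (ContinuousLinearMap.opNorm_nonneg _).trans (hC₂ 0)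
  have hC0 : 0 ≤ C := (ContinuousLinearMap.opNorm_nonneg _).trans (hC 0)
  have hK : (√C₂ * C) ^ 2 = C₂ * C ^ 2 := by rw [mul_pow, Real.sq_sqrt hC₂0]
  set n : ℕ := ⌈‖h₀‖ + 1⌉₊
  refine ⟨min δ₀ (min ε 1), by positivity, B₀, hB₀, hB₀fin, fun x => √C₂ * C * ρ n x,
    (hρmeas n).const_mul _, fun x => mul_nonneg (by positivity) (hρnonneg n x), ?_, ?_⟩
  · simpa only [mul_pow, hK] using (hρint n).const_mul (C₂ * C ^ 2)
  intro h hhM hhδ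
  simp only [lt_min_iff] at hhδ
  have hhUM : h ∈ U ∩ M := ⟨hballU (by rw [Metric.mem_ball, dist_eq_norm]; exact hhδ.2.1), hhM⟩
  have hhn : ‖h‖ ≤ n := calc
    ‖h‖ ≤ ‖h₀‖ + ‖h - h₀‖ := norm_le_insert' h h₀
    _ ≤ ‖h₀‖ + 1 := by linarith [hhδ.2.2]
    _ ≤ n := Nat.le_ceil _
  filter_upwards [hjump h hhM hhδ.1] with x hx hxB
  calc ‖γ h x - fderiv ℝ φ (Φ h) (Φ (h + γ h x) - Φ h)‖
      ≤ C₂ * C ^ 2 * ‖h + γ h x - h‖ ^ 2 := by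
        simpa only [add_sub_cancel_left] using norm_sub_sub_fderiv_apply_le hφC2 hC₂
          (hΦC1.differentiable one_ne_zero) hC (hφΦ h hhUM) (hφΦ _ (hx hxB))
    _ ≤ C₂ * C ^ 2 * ρ n x ^ 2 := by
        rw [add_sub_cancel_left]
        gcongr
        exact hγbd n x h hhn
    _ = (√C₂ * C * ρ n x) ^ 2 := by rw [mul_pow, hK]

theorem stmt_12
    {H E : Type*}
    [NormedAddCommGroup H] [InnerProductSpace ℝ H] [CompleteSpace H]
    [TopologicalSpace.SeparableSpace H] [MeasurableSpace H] [BorelSpace H]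
    [MeasurableSpace E] (F : Measure E) [SigmaFinite F]
    (γ : H → E → H) (hγmeas : Measurable (Function.uncurry γ))
    (ρ : ℕ → E → ℝ)
    (hρmeas : ∀ n, Measurable (ρ n))
    (hρnonneg : ∀ n x, 0 ≤ ρ n x)
    (hρint : ∀ n, Integrable (fun x => ρ n x ^ 2) F)
    (hγLip : ∀ n : ℕ, ∀ x : E, ∀ h₁ h₂ : H, ‖h₁‖ ≤ (n : ℝ) → ‖h₂‖ ≤ (n : ℝ) →
      ‖γ h₁ x - γ h₂ x‖ ≤ ρ n x * ‖h₁ - h₂‖)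
    (hγbd : ∀ n : ℕ, ∀ x : E, ∀ h : H, ‖h‖ ≤ (n : ℝ) → ‖γ h x‖ ≤ ρ n x)
    (M : Set H) (hMne : M.Nonempty) (h₀ : H) (hh₀ : h₀ ∈ M)
    (U : Set H) (hU : IsOpen U) (hh₀U : h₀ ∈ U)
    (m : ℕ) [NeZero m] (hm : 1 ≤ m)
    (V : Set (EuclideanSpace ℝ (Fin m)))
    (hV : ∃ Vt : Set (EuclideanSpace ℝ (Fin m)), IsOpen Vt ∧
      Vt ∩ {y : EuclideanSpace ℝ (Fin m) | 0 ≤ y 0} = V)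
    (φ : EuclideanSpace ℝ (Fin m) → H)
    (hφC2 : ContDiff ℝ 2 φ)
    (hφbd1 : ∃ C : ℝ, ∀ y, ‖fderiv ℝ φ y‖ ≤ C)
    (hφbd2 : ∃ C : ℝ, ∀ y, ‖fderiv ℝ (fderiv ℝ φ) y‖ ≤ C)
    (hφbij : Set.BijOn φ V (U ∩ M))
    (Φ : H → EuclideanSpace ℝ (Fin m))
    (hΦC1 : ContDiff ℝ 1 Φ)
    (hΦbd : ∃ C : ℝ, ∀ h, ‖fderiv ℝ Φ h‖ ≤ C)
    (hΦφ : ∀ y ∈ V, Φ (φ y) = y)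
    (hφΦ : ∀ h ∈ U ∩ M, φ (Φ h) = h)
    (δ₀ : ℝ) (hδ₀ : 0 < δ₀)
    (B₀ : Set E) (hB₀ : MeasurableSet B₀) (hB₀fin : F B₀ᶜ < ⊤)
    (hjump : ∀ h ∈ M, ‖h - h₀‖ < δ₀ → ∀ᵐ x ∂F, x ∈ B₀ → h + γ h x ∈ U ∩ M) :
    ∃ δ : ℝ, 0 < δ ∧ ∃ B : Set E, MeasurableSet B ∧ F Bᶜ < ⊤ ∧
      ∃ ρ' : E → ℝ, Measurable ρ' ∧ (∀ x, 0 ≤ ρ' x) ∧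
        Integrable (fun x => ρ' x ^ 2) F ∧
        ∀ h ∈ M, ‖h - h₀‖ < δ →
          ∀ᵐ x ∂F, x ∈ B →
            ‖γ h x - fderiv ℝ φ (Φ h) (Φ (h + γ h x) - Φ h)‖ ≤ ρ' x ^ 2 :=
  stmt_12_general F γ ρ hρmeas hρnonneg hρint hγbd M h₀ U hU hh₀U m φ hφC2 hφbd2 Φ hΦC1 hΦbd hφΦ δ₀
    hδ₀ B₀ hB₀ hB₀fin hjump
end

section
/- Let γ : H × E → H satisfy the γ-regularity conditions, let M ⊆ H be nonempty and h₀ ∈ M. Suppose there are an open set U ⊆ H with h₀ ∈ U, an integer m ≥ 1, a set V ⊆ ℝ^m_+ open in ℝ^m_+, and a homeomorphism φ : V → U ∩ M which is the restriction of a twice continuously Fréchet differentiable map φ : ℝ^m → H with bounded first and second derivatives and with Dφ(y) injective for every y ∈ V, such that φ⁻¹ extends to a continuously Fréchet differentiable map Φ : H → ℝ^m with bounded derivative. Assume there exist δ₀ > 0 and B₀ ∈ ℰ with F(E ∖ B₀) < ∞ such that for every h ∈ M with ‖h − h₀‖ < δ₀ one has h + γ(h,x) ∈ U ∩ M for F-almost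 all x ∈ B₀. For h ∈ U ∩ M let P_h denote the orthogonal projection of H onto the finite-dimensional subspace Dφ(Φ(h))(ℝ^m). Then there exists δ > 0 such that: (1) for every h ∈ M with ‖h − h₀‖ < δ, ∫_E ‖γ(h,x) − P_h(γ(h,x))‖ F(dx) < ∞; (2) the map h ↦ ∫_E ( γ(h,x) − P_h(γ(h,x)) ) F(dx) is continuous on {h ∈ M : ‖h − h₀‖ < δ}. -/
/-!
For `h` near `h₀` and `x ∈ B₀`, both `h` and `h + γ(h,x)` lie on the chart `U ∩ M`, so
`γ(h,x)` is a chord of `M`. Writing it as `φ(Φ(h + γ)) - φ(Φ h)`, Taylor's formula for `φ` and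
the Lipschitz bound on `Φ` show that its component normal to `range Dφ(Φ h)` is
`O(‖γ‖²) = O(ρ_n²)`; off `B₀`, a set of finite measure, it is at most `ρ_n ≤ 1 + ρ_n²`. This
gives an integrable dominating function. The tangent projection equals `A (A† A)⁻¹ A†` with
`A = Dφ(Φ h)` injective, hence depends continuously on `h`, and dominated convergence gives
continuity of the integral.
-/

open MeasureTheory
open scoped ENNReal InnerProductSpace InnerProduct NNReal

namespace ContinuousLinearMap

variable {𝕜 E H : Type*} [RCLike 𝕜]
  [NormedAddCommGroup E] [InnerProductSpace 𝕜 E] [FiniteDimensional 𝕜 E] [CompleteSpace E]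
  [NormedAddCommGroup H] [InnerProductSpace 𝕜 H] [CompleteSpace H]

theorem isUnit_adjoint_comp_self {A : E →L[𝕜] H} (hA : Function.Injective A) :
    IsUnit (A† ∘L A) := by
  have hinj : Function.Injective (A† ∘L A) := by
    refine (injective_iff_map_eq_zero _).2 fun v hv => hA ?_
    rw [map_zero, ← inner_self_eq_zero (𝕜 := 𝕜), ← adjoint_inner_left, ← comp_apply, hv,
      inner_zero_left]
  exact isUnit_iff_bijective.2 ⟨hinj, LinearMap.injective_iff_surjective.1 hinj⟩

theorem starProjection_range_eq {A : E →L[𝕜] H} (hA : IsUnit (A† ∘L A)) :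
    (A : E →ₗ[𝕜] H).range.starProjection = A ∘L Ring.inverse (A† ∘L A) ∘L A† := by
  ext w
  refine Submodule.eq_starProjection_of_mem_of_inner_eq_zero ⟨_, rfl⟩ ?_
  rintro _ ⟨v, rfl⟩
  rw [coe_coe, ← adjoint_inner_left, map_sub]
  change ⟪(A†) w - ((A† ∘L A) * Ring.inverse (A† ∘L A)) ((A†) w), v⟫_𝕜 = 0
  rw [Ring.mul_inverse_cancel _ hA, one_apply_eq_self, sub_self, inner_zero_left]

theorem continuousAt_starProjection_range {A₀ : E →L[𝕜] H} (hA₀ : Function.Injective A₀) :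
    ContinuousAt (fun A : E →L[𝕜] H => (A : E →ₗ[𝕜] H).range.starProjection) A₀ := by
  have hG : Continuous fun A : E →L[𝕜] H => A† ∘L A :=
    (adjoint (𝕜 := 𝕜) (E := E) (F := H)).continuous.clm_comp continuous_id
  have hunit : ∀ᶠ A in nhds A₀, IsUnit (A† ∘L A) :=
    hG.continuousAt.preimage_mem_nhds (Units.isOpen.mem_nhds (isUnit_adjoint_comp_self hA₀))
  refine ContinuousAt.congr ?_ (hunit.mono fun A hA => (starProjection_range_eq hA).symm)
  obtain ⟨u, hu⟩ := isUnit_adjoint_comp_self hA₀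
  refine continuousAt_id.clm_comp (ContinuousAt.clm_comp ?_ adjoint.continuous.continuousAt)
  have hinv := NormedRing.inverse_continuousAt u
  rw [hu] at hinv
  exact ContinuousAt.comp (f := fun A : E →L[𝕜] H => A† ∘L A) hinv hG.continuousAt

end ContinuousLinearMap

theorem Submodule.norm_sub_starProjection_le {𝕜 H : Type*} [RCLike 𝕜] [NormedAddCommGroup H]
    [InnerProductSpace 𝕜 H] (K : Submodule 𝕜 H) [K.HasOrthogonalProjection] (w : H) {u : H}
    (hu : u ∈ K) : ‖w - K.starProjection w‖ ≤ ‖w - u‖ := by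
  rw [starProjection_minimal]
  exact ciInf_le ⟨0, Set.forall_mem_range.2 fun _ => norm_nonneg _⟩ (⟨u, hu⟩ : K)

section Calculus

variable {E F : Type*} [NormedAddCommGroup E] [NormedSpace ℝ E]
  [NormedAddCommGroup F] [NormedSpace ℝ F] {f : E → F}

theorem Differentiable.exists_lipschitzWith_of_bddAbove_norm_fderiv (hf : Differentiable ℝ f)
    (hbd : ∃ C : ℝ, ∀ x, ‖fderiv ℝ f x‖ ≤ C) : ∃ K : ℝ≥0, LipschitzWith K f := by
  obtain ⟨C, hC⟩ := hbd
  refine ⟨C.toNNReal, lipschitzWith_of_nnnorm_fderiv_le hf fun x => ?_⟩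
  rw [← NNReal.coe_le_coe, coe_nnnorm, Real.coe_toNNReal']
  exact (hC x).trans (le_max_left _ _)

theorem norm_image_sub_sub_fderiv_le {C : ℝ≥0} (hf : Differentiable ℝ f)
    (hf' : LipschitzWith C (fderiv ℝ f)) (x y : E) :
    ‖f y - f x - fderiv ℝ f x (y - x)‖ ≤ C * ‖y - x‖ ^ 2 := by
  have hbound : ∀ z ∈ Metric.closedBall x ‖y - x‖,
      ‖fderiv ℝ f z - fderiv ℝ f x‖ ≤ C * ‖y - x‖ :=
    fun z hz => (hf'.norm_sub_le z x).trans (by gcongr; rwa [← dist_eq_norm])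
  calc ‖f y - f x - fderiv ℝ f x (y - x)‖ ≤ C * ‖y - x‖ * ‖y - x‖ :=
        (convex_closedBall x _).norm_image_sub_le_of_norm_fderiv_le' (fun z _ => hf z) hbound
          (Metric.mem_closedBall_self (norm_nonneg _)) (by simp [dist_eq_norm])
    _ = C * ‖y - x‖ ^ 2 := by ring

end Calculus

theorem norm_sub_starProjection_range_fderiv_le {E H : Type*} [NormedAddCommGroup E]
    [NormedSpace ℝ E] [FiniteDimensional ℝ E] [NormedAddCommGroup H] [InnerProductSpace ℝ H]
    {φ : E → H} {Φ : H → E} {N : Set H} {C₂ CΦ : ℝ≥0} (hφ : Differentiable ℝ φ)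
    (hφ' : LipschitzWith C₂ (fderiv ℝ φ)) (hΦ : LipschitzWith CΦ Φ)
    (hφΦ : ∀ h ∈ N, φ (Φ h) = h) {h v : H} (hh : h ∈ N) (hhv : h + v ∈ N) :
    ‖v - (fderiv ℝ φ (Φ h) : E →ₗ[ℝ] H).range.starProjection v‖ ≤
      C₂ * CΦ ^ 2 * ‖v‖ ^ 2 := by
  set A := fderiv ℝ φ (Φ h)
  calc ‖v - (A : E →ₗ[ℝ] H).range.starProjection v‖ ≤ ‖v - A (Φ (h + v) - Φ h)‖ :=
        Submodule.norm_sub_starProjection_le _ _ ⟨_, rfl⟩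
    _ = ‖φ (Φ (h + v)) - φ (Φ h) - A (Φ (h + v) - Φ h)‖ := by
        rw [hφΦ _ hhv, hφΦ _ hh, add_sub_cancel_left]
    _ ≤ C₂ * ‖Φ (h + v) - Φ h‖ ^ 2 := norm_image_sub_sub_fderiv_le hφ hφ' _ _
    _ ≤ C₂ * (CΦ * ‖v‖) ^ 2 := by
        gcongr
        simpa using hΦ.norm_sub_le (h + v) h
    _ = C₂ * CΦ ^ 2 * ‖v‖ ^ 2 := by ring

theorem integrable_and_continuousOn_integral_sub_clm_of_dominated {H E : Type*}
    [NormedAddCommGroup H] [NormedSpace ℝ H] [MeasurableSpace H] [BorelSpace H]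
    [SecondCountableTopology H] [MeasurableSpace E] {F : Measure E}
    {γ : H → E → H} (hγmeas : Measurable (Function.uncurry γ))
    {ρ : E → ℝ} (hρint : Integrable (fun x => ρ x ^ 2) F) {S : Set H}
    (hγLip : ∀ x, ∀ h₁ ∈ S, ∀ h₂ ∈ S, ‖γ h₁ x - γ h₂ x‖ ≤ ρ x * ‖h₁ - h₂‖)
    (hγbd : ∀ x, ∀ h ∈ S, ‖γ h x‖ ≤ ρ x)
    {T : H → H →L[ℝ] H} (hT : ContinuousOn T S) (hTle : ∀ h ∈ S, ∀ w, ‖w - T h w‖ ≤ ‖w‖)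
    {B : Set E} (hB : MeasurableSet B) (hBfin : F Bᶜ < ∞) {K : ℝ≥0}
    (hTB : ∀ h ∈ S, ∀ᵐ x ∂F, x ∈ B → ‖γ h x - T h (γ h x)‖ ≤ K * ‖γ h x‖ ^ 2) :
    (∀ h ∈ S, Integrable (fun x => γ h x - T h (γ h x)) F) ∧
      ContinuousOn (fun h => ∫ x, γ h x - T h (γ h x) ∂F) S := by
  set bound : E → ℝ := fun x => K * ρ x ^ 2 + Bᶜ.indicator (fun x => 1 + ρ x ^ 2) x
  have hbound_int : Integrable bound F :=
    (hρint.const_mul K).add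
      (((integrableOn_const hBfin.ne).add hρint.integrableOn).integrable_indicator hB.compl)
  have hmeas : ∀ h ∈ S, AEStronglyMeasurable (fun x => γ h x - T h (γ h x)) F :=
    fun h _ => have hγh : Measurable (γ h) := hγmeas.comp measurable_prodMk_left
    (hγh.sub ((T h).continuous.measurable.comp hγh)).aestronglyMeasurable
  have hdom : ∀ h ∈ S, ∀ᵐ x ∂F, ‖γ h x - T h (γ h x)‖ ≤ bound x := by
    intro h hh
    filter_upwards [hTB h hh] with x hx
    have hγρ := hγbd x h hh
    by_cases hxB : x ∈ B
    · calc ‖γ h x - T h (γ h x)‖ ≤ K * ‖γ h x‖ ^ 2 := hx hxB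
        _ ≤ K * ρ x ^ 2 := by gcongr
        _ = bound x := by simp [bound, hxB]
    · calc ‖γ h x - T h (γ h x)‖ ≤ ρ x := (hTle h hh _).trans hγρ
        _ ≤ 1 + ρ x ^ 2 := by nlinarith [sq_nonneg (ρ x - 1)]
        _ ≤ bound x := by
          simp only [bound, Set.indicator_of_mem (Set.mem_compl hxB)]
          exact le_add_of_nonneg_left (by positivity)
  have hcont : ∀ x, ContinuousOn (fun h => γ h x - T h (γ h x)) S := fun x =>
    have hγx : ContinuousOn (γ · x) S :=
      (LipschitzOnWith.of_dist_le' fun h₁ h₁S h₂ h₂S => by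
        simpa only [dist_eq_norm] using hγLip x h₁ h₁S h₂ h₂S).continuousOn
    hγx.sub (hT.clm_apply hγx)
  exact ⟨fun h hh => hbound_int.mono' (hmeas h hh) (hdom h hh),
    continuousOn_of_dominated hmeas hdom hbound_int (.of_forall hcont)⟩

theorem stmt_13_general
    {H E : Type*}
    [NormedAddCommGroup H] [InnerProductSpace ℝ H] [CompleteSpace H]
    [TopologicalSpace.SeparableSpace H] [MeasurableSpace H] [BorelSpace H]
    [MeasurableSpace E] (F : Measure E)
    (γ : H → E → H) (hγmeas : Measurable (Function.uncurry γ))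
    (ρ : ℕ → E → ℝ)
    (hρint : ∀ n, Integrable (fun x => ρ n x ^ 2) F)
    (hγLip : ∀ n : ℕ, ∀ x : E, ∀ h₁ h₂ : H, ‖h₁‖ ≤ (n : ℝ) → ‖h₂‖ ≤ (n : ℝ) →
      ‖γ h₁ x - γ h₂ x‖ ≤ ρ n x * ‖h₁ - h₂‖)
    (hγbd : ∀ n : ℕ, ∀ x : E, ∀ h : H, ‖h‖ ≤ (n : ℝ) → ‖γ h x‖ ≤ ρ n x)
    (M : Set H) (h₀ : H)
    (U : Set H) (hU : IsOpen U) (hh₀U : h₀ ∈ U)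
    (m : ℕ)
    (V : Set (EuclideanSpace ℝ (Fin m)))
    (φ : EuclideanSpace ℝ (Fin m) → H)
    (hφC2 : ContDiff ℝ 2 φ)
    (hφbd2 : ∃ C : ℝ, ∀ y, ‖fderiv ℝ (fderiv ℝ φ) y‖ ≤ C)
    (hφinj : ∀ y ∈ V, Function.Injective (fderiv ℝ φ y))
    (hφbij : Set.BijOn φ V (U ∩ M))
    (Φ : H → EuclideanSpace ℝ (Fin m))
    (hΦC1 : ContDiff ℝ 1 Φ)
    (hΦbd : ∃ C : ℝ, ∀ h, ‖fderiv ℝ Φ h‖ ≤ C)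
    (hΦφ : ∀ y ∈ V, Φ (φ y) = y)
    (hφΦ : ∀ h ∈ U ∩ M, φ (Φ h) = h)
    (δ₀ : ℝ) (hδ₀ : 0 < δ₀)
    (B₀ : Set E) (hB₀ : MeasurableSet B₀) (hB₀fin : F B₀ᶜ < ⊤)
    (hjump : ∀ h ∈ M, ‖h - h₀‖ < δ₀ → ∀ᵐ x ∂F, x ∈ B₀ → h + γ h x ∈ U ∩ M)
    -- P h is the orthogonal projection of H onto the tangent space Dφ(Φ(h))(ℝ^m)
    (P : H → H → H)
    (hP : ∀ h ∈ U ∩ M, ∀ w : H,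
      P h w ∈ Set.range (fderiv ℝ φ (Φ h)) ∧
      ∀ u ∈ Set.range (fderiv ℝ φ (Φ h)), ⟪w - P h w, u⟫_ℝ = 0) :
    ∃ δ : ℝ, 0 < δ ∧
      (∀ h ∈ M, ‖h - h₀‖ < δ → Integrable (fun x => γ h x - P h (γ h x)) F) ∧
      ContinuousOn (fun h : H => ∫ x, (γ h x - P h (γ h x)) ∂F)
        {h ∈ M | ‖h - h₀‖ < δ} := by
  have hφ : Differentiable ℝ φ := hφC2.differentiable two_ne_zero
  obtain ⟨C₂, hC₂⟩ := ((hφC2.fderiv_right le_rfl).differentiable one_ne_zero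
    ).exists_lipschitzWith_of_bddAbove_norm_fderiv hφbd2
  obtain ⟨CΦ, hCΦ⟩ :=
    (hΦC1.differentiable one_ne_zero).exists_lipschitzWith_of_bddAbove_norm_fderiv hΦbd
  obtain ⟨δ, hδ, hball⟩ := Metric.isOpen_iff.1 (hU.inter (Metric.isOpen_ball.inter
    Metric.isOpen_ball)) h₀ ⟨hh₀U, Metric.mem_ball_self hδ₀, mem_ball_zero_iff.2 (lt_add_one _)⟩
  set S := {h ∈ M | ‖h - h₀‖ < δ}
  set n := ⌈‖h₀‖ + 1⌉₊
  have hS : ∀ h ∈ S, h ∈ U ∩ M ∧ ‖h - h₀‖ < δ₀ ∧ ‖h‖ ≤ n := by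
    rintro h ⟨hM, hlt⟩
    obtain ⟨hhU, hhδ₀, hhn⟩ := hball (mem_ball_iff_norm.2 hlt)
    exact ⟨⟨hhU, hM⟩, mem_ball_iff_norm.1 hhδ₀, (mem_ball_zero_iff.1 hhn).le.trans (Nat.le_ceil _)⟩
  let T : H → H →L[ℝ] H := fun h =>
    (fderiv ℝ φ (Φ h) : EuclideanSpace ℝ (Fin m) →ₗ[ℝ] H).range.starProjection
  have hPT : ∀ h ∈ S, (fun x => γ h x - P h (γ h x)) = fun x => γ h x - T h (γ h x) :=
    fun h hh => funext fun x => by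
      have hPh := hP h (hS h hh).1 (γ h x)
      rw [Submodule.eq_starProjection_of_mem_of_inner_eq_zero hPh.1 hPh.2]
  have hT : ContinuousOn T S := fun h hh => by
    obtain ⟨y, hy, rfl⟩ := hφbij.surjOn (hS h hh).1
    refine (ContinuousLinearMap.continuousAt_starProjection_range ?_).comp_continuousWithinAt
      ((hφC2.continuous_fderiv two_ne_zero).comp hΦC1.continuous).continuousWithinAt
    rw [hΦφ y hy]
    exact hφinj y hy
  obtain ⟨hint, hcont⟩ := integrable_and_continuousOn_integral_sub_clm_of_dominated hγmeas
    (hρint n) (fun x h₁ h₁S h₂ h₂S => hγLip n x h₁ h₂ (hS h₁ h₁S).2.2 (hS h₂ h₂S).2.2)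
    (fun x h hh => hγbd n x h (hS h hh).2.2) hT
    (fun h hh w => by simpa using Submodule.norm_sub_starProjection_le _ w (zero_mem _))
    hB₀ hB₀fin (K := C₂ * CΦ ^ 2) fun h hh => by
      filter_upwards [hjump h (hS h hh).1.2 (hS h hh).2.1] with x hx hxB
      exact_mod_cast
        norm_sub_starProjection_range_fderiv_le hφ hC₂ hCΦ hφΦ (hS h hh).1 (hx hxB)
  exact ⟨δ, hδ, fun h hM hlt => hPT h ⟨hM, hlt⟩ ▸ hint h ⟨hM, hlt⟩,
    hcont.congr fun h hh => by simp only [hPT h hh]⟩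

theorem stmt_13
    {H E : Type*}
    [NormedAddCommGroup H] [InnerProductSpace ℝ H] [CompleteSpace H]
    [TopologicalSpace.SeparableSpace H] [MeasurableSpace H] [BorelSpace H]
    [MeasurableSpace E] (F : Measure E) [SigmaFinite F]
    (γ : H → E → H) (hγmeas : Measurable (Function.uncurry γ))
    (ρ : ℕ → E → ℝ)
    (hρmeas : ∀ n, Measurable (ρ n))
    (hρnonneg : ∀ n x, 0 ≤ ρ n x)
    (hρint : ∀ n, Integrable (fun x => ρ n x ^ 2) F)
    (hγLip : ∀ n : ℕ, ∀ x : E, ∀ h₁ h₂ : H, ‖h₁‖ ≤ (n : ℝ) → ‖h₂‖ ≤ (n : ℝ) →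
      ‖γ h₁ x - γ h₂ x‖ ≤ ρ n x * ‖h₁ - h₂‖)
    (hγbd : ∀ n : ℕ, ∀ x : E, ∀ h : H, ‖h‖ ≤ (n : ℝ) → ‖γ h x‖ ≤ ρ n x)
    (M : Set H) (hMne : M.Nonempty) (h₀ : H) (hh₀ : h₀ ∈ M)
    (U : Set H) (hU : IsOpen U) (hh₀U : h₀ ∈ U)
    (m : ℕ) [NeZero m] (hm : 1 ≤ m)
    (V : Set (EuclideanSpace ℝ (Fin m)))
    (hV : ∃ Vt : Set (EuclideanSpace ℝ (Fin m)), IsOpen Vt ∧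
      Vt ∩ {y : EuclideanSpace ℝ (Fin m) | 0 ≤ y 0} = V)
    (φ : EuclideanSpace ℝ (Fin m) → H)
    (hφC2 : ContDiff ℝ 2 φ)
    (hφbd1 : ∃ C : ℝ, ∀ y, ‖fderiv ℝ φ y‖ ≤ C)
    (hφbd2 : ∃ C : ℝ, ∀ y, ‖fderiv ℝ (fderiv ℝ φ) y‖ ≤ C)
    (hφinj : ∀ y ∈ V, Function.Injective (fderiv ℝ φ y))
    (hφbij : Set.BijOn φ V (U ∩ M))
    (Φ : H → EuclideanSpace ℝ (Fin m))
    (hΦC1 : ContDiff ℝ 1 Φ)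
    (hΦbd : ∃ C : ℝ, ∀ h, ‖fderiv ℝ Φ h‖ ≤ C)
    (hΦφ : ∀ y ∈ V, Φ (φ y) = y)
    (hφΦ : ∀ h ∈ U ∩ M, φ (Φ h) = h)
    (δ₀ : ℝ) (hδ₀ : 0 < δ₀)
    (B₀ : Set E) (hB₀ : MeasurableSet B₀) (hB₀fin : F B₀ᶜ < ⊤)
    (hjump : ∀ h ∈ M, ‖h - h₀‖ < δ₀ → ∀ᵐ x ∂F, x ∈ B₀ → h + γ h x ∈ U ∩ M)
    -- P h is the orthogonal projection of H onto the tangent space Dφ(Φ(h))(ℝ^m)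
    (P : H → H → H)
    (hP : ∀ h ∈ U ∩ M, ∀ w : H,
      P h w ∈ Set.range (fderiv ℝ φ (Φ h)) ∧
      ∀ u ∈ Set.range (fderiv ℝ φ (Φ h)), ⟪w - P h w, u⟫_ℝ = 0) :
    ∃ δ : ℝ, 0 < δ ∧
      (∀ h ∈ M, ‖h - h₀‖ < δ → Integrable (fun x => γ h x - P h (γ h x)) F) ∧
      ContinuousOn (fun h : H => ∫ x, (γ h x - P h (γ h x)) ∂F)
        {h ∈ M | ‖h - h₀‖ < δ} :=
  stmt_13_general F γ hγmeas ρ hρint hγLip hγbd M h₀ U hU hh₀U m V φ hφC2 hφbd2 hφinj hφbij Φ hΦC1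
    hΦbd hΦφ hφΦ δ₀ hδ₀ B₀ hB₀ hB₀fin hjump P hP
end

section
/- Let γ : H × E → H satisfy the γ-regularity conditions, let M ⊆ H be nonempty. Suppose there are an open set U ⊆ H, an integer m ≥ 1, a set V ⊆ ℝ^m_+ open in ℝ^m_+, and a homeomorphism φ : V → U ∩ M which is the restriction of a twice continuously Fréchet differentiable map φ : ℝ^m → H with bounded first and second derivatives and with Dφ(y') injective for every y' ∈ V, such that φ⁻¹ extends to a continuously Fréchet differentiable map Φ : H → ℝ^m with bounded derivative. Let h ∈ U ∩ M with y := Φ(h) ∈ ∂V (i.e. y₁ = 0), let η be the inward pointing normal vector associated with Dφ(y), and assume there exist δ > 0 and B ∈ ℰ with F(E ∖ B) < ∞ such that for every h' ∈ M with ‖h' − h‖ < δ one has h' + γ(h',x) ∈ U ∩ M for F-almost all x ∈ B. Then ∫_E |⟨η, γ(h,x)⟩| F(dx) < ∞ if and only if ∫_E |⟨η, Dφ(y)(Φ(h + γ(h,x)) − Φ(h))⟩| F(dx) < ∞. -/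
/-!
Write `Γ x = γ(h, x)` and `L = Dφ(y)`. The functions inside the two absolute values differ by
`⟪η, Γ - L (Φ (h + Γ) - Φ h)⟫`, so it suffices that this difference is integrable. Where `h + Γ`
stays in the chart, `Γ = φ (Φ (h + Γ)) - φ (Φ h)`, so the difference is a second-order Taylor
remainder of `φ` and is bounded by a multiple of `‖Γ‖² ≤ ρ²`, which is integrable. On the
remaining set `Bᶜ`, of finite measure, it is only bounded by a multiple of `ρ`, which is
integrable there because `ρ ∈ L²`.
-/

open MeasureTheory Set Metric
open scoped ENNReal InnerProductSpace

section Calculus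

variable {E F : Type*} [NormedAddCommGroup E] [NormedSpace ℝ E]
  [NormedAddCommGroup F] [NormedSpace ℝ F]

theorem norm_image_sub_le_of_forall_norm_fderiv_le {f : E → F} {C : ℝ}
    (hf : Differentiable ℝ f) (hC : ∀ z, ‖fderiv ℝ f z‖ ≤ C) (a b : E) :
    ‖f a - f b‖ ≤ C * ‖a - b‖ :=
  convex_univ.norm_image_sub_le_of_norm_fderiv_le (fun z _ => hf z) (fun z _ => hC z)
    (mem_univ b) (mem_univ a)

theorem norm_image_sub_sub_fderiv_le_of_forall_norm_fderiv_fderiv_le {f : E → F} {C : ℝ}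
    (hf : Differentiable ℝ f) (hf' : Differentiable ℝ (fderiv ℝ f))
    (hC : ∀ z, ‖fderiv ℝ (fderiv ℝ f) z‖ ≤ C) (a b : E) :
    ‖f a - f b - fderiv ℝ f b (a - b)‖ ≤ C * ‖a - b‖ ^ 2 := by
  have hC₀ : 0 ≤ C := (ContinuousLinearMap.opNorm_nonneg _).trans (hC b)
  have hbound : ∀ z ∈ closedBall b ‖a - b‖, ‖fderiv ℝ f z - fderiv ℝ f b‖ ≤ C * ‖a - b‖ :=
    fun z hz => (norm_image_sub_le_of_forall_norm_fderiv_le hf' hC z b).trans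
      (by gcongr; rwa [mem_closedBall, dist_eq_norm] at hz)
  calc ‖f a - f b - fderiv ℝ f b (a - b)‖ ≤ C * ‖a - b‖ * ‖a - b‖ :=
        (convex_closedBall b ‖a - b‖).norm_image_sub_le_of_norm_fderiv_le' (fun z _ => hf z)
          hbound (mem_closedBall_self (norm_nonneg _)) (by rw [mem_closedBall, dist_eq_norm])
    _ = C * ‖a - b‖ ^ 2 := by ring

variable {φ : E → F} {Φ : F → E} {CΦ : ℝ}

theorem norm_sub_fderiv_apply_image_sub_le (L : E →L[ℝ] F) (hΦ : Differentiable ℝ Φ)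
    (hCΦ : ∀ z, ‖fderiv ℝ Φ z‖ ≤ CΦ) (u w : F) :
    ‖w - L (Φ (u + w) - Φ u)‖ ≤ (1 + ‖L‖ * CΦ) * ‖w‖ := by
  have hΦw : ‖Φ (u + w) - Φ u‖ ≤ CΦ * ‖w‖ := by
    simpa using norm_image_sub_le_of_forall_norm_fderiv_le hΦ hCΦ (u + w) u
  calc ‖w - L (Φ (u + w) - Φ u)‖ ≤ ‖w‖ + ‖L‖ * ‖Φ (u + w) - Φ u‖ :=
        (norm_sub_le _ _).trans (by gcongr; exact L.le_opNorm _)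
    _ ≤ ‖w‖ + ‖L‖ * (CΦ * ‖w‖) := by gcongr
    _ = (1 + ‖L‖ * CΦ) * ‖w‖ := by ring

theorem norm_sub_fderiv_apply_image_sub_le_sq {C₂ : ℝ} (hφ : Differentiable ℝ φ)
    (hφ' : Differentiable ℝ (fderiv ℝ φ)) (hC₂ : ∀ z, ‖fderiv ℝ (fderiv ℝ φ) z‖ ≤ C₂)
    (hΦ : Differentiable ℝ Φ) (hCΦ : ∀ z, ‖fderiv ℝ Φ z‖ ≤ CΦ) {u w : F}
    (hu : φ (Φ u) = u) (huw : φ (Φ (u + w)) = u + w) :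
    ‖w - fderiv ℝ φ (Φ u) (Φ (u + w) - Φ u)‖ ≤ C₂ * CΦ ^ 2 * ‖w‖ ^ 2 := by
  have hC₂₀ : 0 ≤ C₂ := (ContinuousLinearMap.opNorm_nonneg _).trans (hC₂ 0)
  have hΦw : ‖Φ (u + w) - Φ u‖ ≤ CΦ * ‖w‖ := by
    simpa using norm_image_sub_le_of_forall_norm_fderiv_le hΦ hCΦ (u + w) u
  calc ‖w - fderiv ℝ φ (Φ u) (Φ (u + w) - Φ u)‖
        = ‖φ (Φ (u + w)) - φ (Φ u) - fderiv ℝ φ (Φ u) (Φ (u + w) - Φ u)‖ := by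
          rw [hu, huw, add_sub_cancel_left]
    _ ≤ C₂ * ‖Φ (u + w) - Φ u‖ ^ 2 :=
          norm_image_sub_sub_fderiv_le_of_forall_norm_fderiv_fderiv_le hφ hφ' hC₂ _ _
    _ ≤ C₂ * (CΦ * ‖w‖) ^ 2 := by gcongr
    _ = C₂ * CΦ ^ 2 * ‖w‖ ^ 2 := by ring

end Calculus

section Integrability

variable {α : Type*} [MeasurableSpace α] {μ : Measure α}

theorem integrableOn_of_integrable_sq {f : α → ℝ} {s : Set α} (hf : AEStronglyMeasurable f μ)
    (hf2 : Integrable (fun x => f x ^ 2) μ) (hs : μ s ≠ ∞) : IntegrableOn f s μ := by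
  have : IsFiniteMeasure (μ.restrict s) := isFiniteMeasure_restrict.mpr hs
  exact (((memLp_two_iff_integrable_sq hf).mpr hf2).restrict s).integrable one_le_two

theorem integrable_of_norm_le_sq_on_of_norm_le_on_compl {G : Type*} [NormedAddCommGroup G]
    {g : α → G} {ρ : α → ℝ} {s : Set α} {a b : ℝ} (hg : AEStronglyMeasurable g μ)
    (hρ : AEStronglyMeasurable ρ μ) (hρ2 : Integrable (fun x => ρ x ^ 2) μ)
    (hs : MeasurableSet s) (hsc : μ sᶜ ≠ ∞) (hon : ∀ᵐ x ∂μ, x ∈ s → ‖g x‖ ≤ a * ρ x ^ 2)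
    (hoff : ∀ x ∉ s, ‖g x‖ ≤ b * ρ x) : Integrable g μ := by
  have hgs : IntegrableOn g s μ :=
    (hρ2.const_mul a).integrableOn.mono' hg.restrict ((ae_restrict_iff' hs).mpr hon)
  have hgsc : IntegrableOn g sᶜ μ :=
    ((integrableOn_of_integrable_sq hρ hρ2 hsc).const_mul b).mono' hg.restrict
      (ae_restrict_of_forall_mem hs.compl hoff)
  simpa using hgs.union hgsc

theorem integrable_abs_iff_of_integrable_sub {f g : α → ℝ} (hf : AEStronglyMeasurable f μ)
    (hg : AEStronglyMeasurable g μ) (hfg : Integrable (f - g) μ) :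
    Integrable (fun x => |f x|) μ ↔ Integrable (fun x => |g x|) μ := by
  simp only [← Real.norm_eq_abs, integrable_norm_iff hf, integrable_norm_iff hg]
  rw [← integrable_add_iff_integrable_left hfg (g := g), add_sub_cancel]

end Integrability

theorem stmt_14_general
    {H E : Type*}
    [NormedAddCommGroup H] [InnerProductSpace ℝ H]
    [MeasurableSpace H] [BorelSpace H]
    [MeasurableSpace E] (F : Measure E)
    (γ : H → E → H) (hγmeas : Measurable (Function.uncurry γ))
    (ρ : ℕ → E → ℝ)
    (hρmeas : ∀ n, Measurable (ρ n))
    (hρint : ∀ n, Integrable (fun x => ρ n x ^ 2) F)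
    (hγbd : ∀ n : ℕ, ∀ x : E, ∀ h : H, ‖h‖ ≤ (n : ℝ) → ‖γ h x‖ ≤ ρ n x)
    (M : Set H)
    (U : Set H)
    (m : ℕ)
    (φ : EuclideanSpace ℝ (Fin m) → H)
    (hφC2 : ContDiff ℝ 2 φ)
    (hφbd2 : ∃ C : ℝ, ∀ y', ‖fderiv ℝ (fderiv ℝ φ) y'‖ ≤ C)
    (Φ : H → EuclideanSpace ℝ (Fin m))
    (hΦC1 : ContDiff ℝ 1 Φ)
    (hΦbd : ∃ C : ℝ, ∀ h', ‖fderiv ℝ Φ h'‖ ≤ C)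
    (hφΦ : ∀ h' ∈ U ∩ M, φ (Φ h') = h')
    (h : H) (hhUM : h ∈ U ∩ M)
    (y : EuclideanSpace ℝ (Fin m)) (hy : y = Φ h)
    (η : H)
    (δ : ℝ) (hδ : 0 < δ)
    (B : Set E) (hB : MeasurableSet B) (hBfin : F Bᶜ < ⊤)
    (hjump : ∀ h' ∈ M, ‖h' - h‖ < δ → ∀ᵐ x ∂F, x ∈ B → h' + γ h' x ∈ U ∩ M) :
    Integrable (fun x => |⟪η, γ h x⟫_ℝ|) F ↔
      Integrable (fun x => |⟪η, fderiv ℝ φ y (Φ (h + γ h x) - Φ h)⟫_ℝ|) F := by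
  obtain ⟨C₂, hC₂⟩ := hφbd2
  obtain ⟨CΦ, hCΦ⟩ := hΦbd
  subst hy
  have hφ : Differentiable ℝ φ := hφC2.differentiable (by norm_num)
  have hφ' : Differentiable ℝ (fderiv ℝ φ) :=
    (hφC2.fderiv_right le_rfl).differentiable one_ne_zero
  have hΦ : Differentiable ℝ Φ := hΦC1.differentiable one_ne_zero
  have hCΦ₀ : 0 ≤ CΦ := (norm_nonneg _).trans (hCΦ 0)
  have hC₂₀ : 0 ≤ C₂ := (ContinuousLinearMap.opNorm_nonneg _).trans (hC₂ 0)
  set L := fderiv ℝ φ (Φ h)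
  set n : ℕ := ⌈‖h‖⌉₊
  have hγρ (x : E) : ‖γ h x‖ ≤ ρ n x := hγbd n x h (Nat.le_ceil _)
  have hγh : Measurable (γ h) := hγmeas.comp (measurable_const.prodMk measurable_id)
  have hf₁ : Measurable fun x => ⟪η, γ h x⟫_ℝ := by fun_prop
  have hf₂ : Measurable fun x => ⟪η, L (Φ (h + γ h x) - Φ h)⟫_ℝ := by
    have := hΦ.continuous; fun_prop
  have hdiff (x : E) : ‖⟪η, γ h x⟫_ℝ - ⟪η, L (Φ (h + γ h x) - Φ h)⟫_ℝ‖
      ≤ ‖η‖ * ‖γ h x - L (Φ (h + γ h x) - Φ h)‖ := by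
    rw [← inner_sub_right]; exact norm_inner_le_norm _ _
  refine integrable_abs_iff_of_integrable_sub hf₁.aestronglyMeasurable hf₂.aestronglyMeasurable
    (integrable_of_norm_le_sq_on_of_norm_le_on_compl (hf₁.sub hf₂).aestronglyMeasurable
      (hρmeas n).aestronglyMeasurable (hρint n) hB hBfin.ne
      (a := ‖η‖ * (C₂ * CΦ ^ 2)) (b := ‖η‖ * (1 + ‖L‖ * CΦ)) ?_ fun x _ => ?_)
  · filter_upwards [hjump h hhUM.2 (by simpa using hδ)] with x hx hxB
    have hr := norm_sub_fderiv_apply_image_sub_le_sq hφ hφ' hC₂ hΦ hCΦ (hφΦ h hhUM)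
      (hφΦ _ (hx hxB))
    calc _ ≤ ‖η‖ * (C₂ * CΦ ^ 2 * ‖γ h x‖ ^ 2) := (hdiff x).trans (by gcongr)
      _ ≤ _ := by rw [← mul_assoc]; gcongr; exact hγρ x
  · have hr := norm_sub_fderiv_apply_image_sub_le L hΦ hCΦ h (γ h x)
    calc _ ≤ ‖η‖ * ((1 + ‖L‖ * CΦ) * ‖γ h x‖) := (hdiff x).trans (by gcongr)
      _ ≤ _ := by rw [← mul_assoc]; gcongr; exact hγρ x

theorem stmt_14
    {H E : Type*}
    [NormedAddCommGroup H] [InnerProductSpace ℝ H] [CompleteSpace H]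
    [TopologicalSpace.SeparableSpace H] [MeasurableSpace H] [BorelSpace H]
    [MeasurableSpace E] (F : Measure E) [SigmaFinite F]
    (γ : H → E → H) (hγmeas : Measurable (Function.uncurry γ))
    (ρ : ℕ → E → ℝ)
    (hρmeas : ∀ n, Measurable (ρ n))
    (hρnonneg : ∀ n x, 0 ≤ ρ n x)
    (hρint : ∀ n, Integrable (fun x => ρ n x ^ 2) F)
    (hγLip : ∀ n : ℕ, ∀ x : E, ∀ h₁ h₂ : H, ‖h₁‖ ≤ (n : ℝ) → ‖h₂‖ ≤ (n : ℝ) →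
      ‖γ h₁ x - γ h₂ x‖ ≤ ρ n x * ‖h₁ - h₂‖)
    (hγbd : ∀ n : ℕ, ∀ x : E, ∀ h : H, ‖h‖ ≤ (n : ℝ) → ‖γ h x‖ ≤ ρ n x)
    (M : Set H) (hMne : M.Nonempty)
    (U : Set H) (hU : IsOpen U)
    (m : ℕ) [NeZero m] (hm : 1 ≤ m)
    (V : Set (EuclideanSpace ℝ (Fin m)))
    (hV : ∃ Vt : Set (EuclideanSpace ℝ (Fin m)), IsOpen Vt ∧
      Vt ∩ {y : EuclideanSpace ℝ (Fin m) | 0 ≤ y 0} = V)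
    (φ : EuclideanSpace ℝ (Fin m) → H)
    (hφC2 : ContDiff ℝ 2 φ)
    (hφbd1 : ∃ C : ℝ, ∀ y', ‖fderiv ℝ φ y'‖ ≤ C)
    (hφbd2 : ∃ C : ℝ, ∀ y', ‖fderiv ℝ (fderiv ℝ φ) y'‖ ≤ C)
    (hφinj : ∀ y' ∈ V, Function.Injective (fderiv ℝ φ y'))
    (hφbij : Set.BijOn φ V (U ∩ M))
    (Φ : H → EuclideanSpace ℝ (Fin m))
    (hΦC1 : ContDiff ℝ 1 Φ)
    (hΦbd : ∃ C : ℝ, ∀ h', ‖fderiv ℝ Φ h'‖ ≤ C)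
    (hΦφ : ∀ y' ∈ V, Φ (φ y') = y')
    (hφΦ : ∀ h' ∈ U ∩ M, φ (Φ h') = h')
    (h : H) (hhUM : h ∈ U ∩ M)
    (y : EuclideanSpace ℝ (Fin m)) (hy : y = Φ h) (hyV : y ∈ V) (hybd : y 0 = 0)
    -- η is the inward pointing normal vector associated with Dφ(y)
    (η : H)
    (hη₁ : η ∈ ⇑(fderiv ℝ φ y) '' {w : EuclideanSpace ℝ (Fin m) | 0 ≤ w 0})
    (hη₂ : ‖η‖ = 1)
    (hη₃ : ∀ v : EuclideanSpace ℝ (Fin m), v 0 = 0 → ⟪η, fderiv ℝ φ y v⟫_ℝ = 0)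
    (δ : ℝ) (hδ : 0 < δ)
    (B : Set E) (hB : MeasurableSet B) (hBfin : F Bᶜ < ⊤)
    (hjump : ∀ h' ∈ M, ‖h' - h‖ < δ → ∀ᵐ x ∂F, x ∈ B → h' + γ h' x ∈ U ∩ M) :
    Integrable (fun x => |⟪η, γ h x⟫_ℝ|) F ↔
      Integrable (fun x => |⟪η, fderiv ℝ φ y (Φ (h + γ h x) - Φ h)⟫_ℝ|) F :=
  stmt_14_general F γ hγmeas ρ hρmeas hρint hγbd M U m φ hφC2 hφbd2 Φ hΦC1 hΦbd hφΦ h hhUM y hy η δ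
    hδ B hB hBfin hjump
end

section
/- Let H be a real separable Hilbert space and let E be a real Banach space equipped with its Borel σ-algebra and a σ-finite measure F; define supp(F) := {x ∈ E : F(B_ε(x)) > 0 for every ε > 0}, where B_ε(x) := {ξ ∈ E : ‖ξ − x‖ < ε}. Let M ⊆ H be nonempty and h ∈ M, and suppose there exist an open set U ⊆ H with h ∈ U, an integer m ≥ 1, a set V ⊆ ℝ^m_+ open in ℝ^m_+, and a homeomorphism φ : V → U ∩ M which is the restriction of a continuously Fréchet differentiable map φ : ℝ^m → H with Dφ(y') injective for every y' ∈ V, together with a continuously Fréchet differentiable map Φ : H → ℝ^m satisfying Φ(φ(y')) = y' for all y' ∈ V. Set y := Φ(h), T_hM := Dφ(y)(ℝ^m), (T_hM)_+ := Dφ(y)(ℝ^m_+), and T_h∂M := Dφ(y)({w ∈ ℝ^m : w₁ = 0}). Let δ : E → H be continuous on a neighborhood of a point x₀ ∈ E and Fréchet differentiable at x₀ with δ(x₀) = 0, and suppose h + δ(x) ∈ closure(M) for F-almost all x ∈ E. Let v ∈ E with v ≠ 0. Then: (1) if there is a sequence (t_n) ⊂ (0,∞) with t_n → 0 such that {x₀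 + t_n v : n ∈ ℕ} ⊆ supp(F) or {x₀ − t_n v : n ∈ ℕ} ⊆ supp(F), then Dδ(x₀)(v) ∈ T_hM; (2) if in addition y ∈ ∂V (i.e. y₁ = 0) and there is a sequence (t_n) ⊂ (0,∞) with t_n → 0 such that {x₀ + t_n v : n ∈ ℕ} ⊆ supp(F), then Dδ(x₀)(v) ∈ (T_hM)_+; (3) if y ∈ ∂V and there are sequences (t_n), (s_n) ⊂ (0,∞) with t_n, s_n → 0 such that {x₀ + t_n v : n ∈ ℕ} ⊆ supp(F) and {x₀ − s_n v : n ∈ ℕ} ⊆ supp(F), then Dδ(x₀)(v) ∈ T_h∂M. -/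
open MeasureTheory Filter Set
open scoped Topology

/-! Along `xₙ = x₀ + tₙ v` in the support of `F`, the almost-sure constraint and continuity of `δ`
give `h + δ xₙ ∈ closure M`, so `L = Dδ(x₀) v` lies in the positive tangent cone of `U ∩ M` at `h`.
As `φ ∘ Φ` is the identity on `U ∩ M`, its derivative `Dφ(Φ h) ∘ DΦ(h)` fixes that cone, whence
`L = Dφ(Φ h) (DΦ(h) L)`. If `(Φ h)₀ = 0`, the coordinate `z ↦ (Φ z)₀` attains its minimum over
`U ∩ M` at `h`, so Fermat's rule on tangent cones gives `(DΦ(h) L)₀ ≥ 0`, with equality when `-L`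
is in the cone as well. -/

namespace MeasureTheory.Measure

theorem support_subset_closure_setOf {X : Type*} [TopologicalSpace X] [MeasurableSpace X]
    {μ : Measure X} {P : X → Prop} (hP : ∀ᵐ x ∂μ, P x) :
    μ.support ⊆ closure {x | P x} :=
  support_subset_of_isClosed isClosed_closure (mem_of_superset hP subset_closure)

theorem mem_support_of_forall_measure_ball_pos {X : Type*} [PseudoMetricSpace X]
    [MeasurableSpace X] {μ : Measure X} {x : X} (hx : ∀ ε : ℝ, 0 < ε → 0 < μ (Metric.ball x ε)) :
    x ∈ μ.support :=
  Metric.nhds_basis_ball.mem_measureSupport.2 hx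

end MeasureTheory.Measure

theorem ContinuousAt.mem_closure_of_mem_support {X Y : Type*} [TopologicalSpace X]
    [MeasurableSpace X] [TopologicalSpace Y] {μ : Measure X} {f : X → Y} {t : Set Y} {x : X}
    (hf : ContinuousAt f x) (hx : x ∈ μ.support) (ht : ∀ᵐ y ∂μ, f y ∈ closure t) :
    f x ∈ closure t :=
  closure_closure (s := t) ▸
    hf.continuousWithinAt.mem_closure (Measure.support_subset_closure_setOf ht hx) fun _ hy ↦ hy

theorem tendsto_add_smul_of_tendsto_zero {E : Type*} [NormedAddCommGroup E] [NormedSpace ℝ E]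
    {α : Type*} {l : Filter α} {t : α → ℝ} (ht : Tendsto t l (𝓝 0)) (x v : E) :
    Tendsto (fun n ↦ x + t n • v) l (𝓝 x) := by
  simpa using tendsto_const_nhds.add (ht.smul_const v)

section TangentCone

variable {E F : Type*} [NormedAddCommGroup E] [NormedSpace ℝ E]
  [NormedAddCommGroup F] [NormedSpace ℝ F]

theorem HasFDerivAt.mem_posTangentConeAt_of_eventually_mem {f : E → F} {f' : E →L[ℝ] F}
    {x v : E} {s : Set F} (hf : HasFDerivAt f f' x) {t : ℕ → ℝ}
    (ht : Tendsto t atTop (𝓝[>] 0)) (hs : ∀ᶠ n in atTop, f (x + t n • v) ∈ s) :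
    f' v ∈ posTangentConeAt s (f x) := by
  have ht_pos : ∀ᶠ n in atTop, 0 < t n := ht.eventually self_mem_nhdsWithin
  have hpoints := tendsto_add_smul_of_tendsto_zero (tendsto_nhds_of_tendsto_nhdsWithin ht) x v
  refine mem_tangentConeAt_of_seq atTop (fun n ↦ (t n)⁻¹.toNNReal)
    (fun n ↦ f (x + t n • v) - f x) ?_ (by simpa using hs) ?_
  · simpa using (hf.continuousAt.tendsto.comp hpoints).sub_const (f x)
  · have hinv := hf.lim v (c := fun n ↦ (t n)⁻¹)
      (tendsto_norm_atTop_atTop.comp (tendsto_inv_nhdsGT_zero.comp ht))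
    refine hinv.congr' ?_
    filter_upwards [ht_pos] with n hn
    rw [NNReal.smul_def, Real.coe_toNNReal _ (inv_pos.2 hn).le, inv_inv]

end TangentCone

section Chart

variable {𝕜 E G : Type*} [NontriviallyNormedField 𝕜] [NormedAddCommGroup E] [NormedSpace 𝕜 E]
  [NormedAddCommGroup G] [NormedSpace 𝕜 G]

theorem HasFDerivWithinAt.apply_eq_self_of_eqOn_id {f : E → E} {f' : E →L[𝕜] E} {s : Set E}
    {x v : E} (hf : HasFDerivWithinAt f f' s x) (hfs : EqOn f id s) (hx : x ∈ s)
    (hv : v ∈ tangentConeAt 𝕜 s x) : f' v = v :=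
  hf.unique_on ((hasFDerivWithinAt_id x s).congr hfs (hfs hx)) hv

theorem fderiv_apply_fderiv_eq_self_of_rightInvOn {φ : G → E} {Φ : E → G} {S : Set E} {h w : E}
    (hinv : RightInvOn Φ φ S) (hh : h ∈ S) (hφ : DifferentiableAt 𝕜 φ (Φ h))
    (hΦ : DifferentiableAt 𝕜 Φ h) (hw : w ∈ tangentConeAt 𝕜 S h) :
    fderiv 𝕜 φ (Φ h) (fderiv 𝕜 Φ h w) = w :=
  (hφ.hasFDerivAt.comp h hΦ.hasFDerivAt).hasFDerivWithinAt.apply_eq_self_of_eqOn_id hinv hh hw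

end Chart

section HalfSpace

variable {E G : Type*} [NormedAddCommGroup E] [NormedSpace ℝ E] [NormedAddCommGroup G]
  [NormedSpace ℝ G] {Φ : E → G} {S : Set E} {h w : E} {ℓ : G →L[ℝ] ℝ}

theorem fderiv_apply_nonneg_of_mapsTo_halfSpace (hΦ : DifferentiableAt ℝ Φ h)
    (hS : MapsTo Φ S {y | 0 ≤ ℓ y}) (hh : ℓ (Φ h) = 0) (hw : w ∈ posTangentConeAt S h) :
    0 ≤ ℓ (fderiv ℝ Φ h w) := by
  have hmin : IsMinOn (ℓ ∘ Φ) S h := fun z hz ↦ show ℓ (Φ h) ≤ ℓ (Φ z) from hh ▸ hS hz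
  exact hmin.localize.hasFDerivWithinAt_nonneg
    (ℓ.hasFDerivAt.comp h hΦ.hasFDerivAt).hasFDerivWithinAt hw

theorem fderiv_apply_eq_zero_of_mapsTo_halfSpace (hΦ : DifferentiableAt ℝ Φ h)
    (hS : MapsTo Φ S {y | 0 ≤ ℓ y}) (hh : ℓ (Φ h) = 0) (hw : w ∈ posTangentConeAt S h)
    (hw' : -w ∈ posTangentConeAt S h) : ℓ (fderiv ℝ Φ h w) = 0 := by
  have := fderiv_apply_nonneg_of_mapsTo_halfSpace hΦ hS hh hw'
  rw [map_neg, map_neg] at this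
  linarith [fderiv_apply_nonneg_of_mapsTo_halfSpace hΦ hS hh hw]

end HalfSpace

theorem mem_posTangentConeAt_of_ae_add_mem_closure {E H : Type*} [NormedAddCommGroup E]
    [NormedSpace ℝ E] [MeasurableSpace E] [NormedAddCommGroup H] [NormedSpace ℝ H]
    (μ : Measure E) {M : Set H} {h : H} {δ : E → H} {δ' : E →L[ℝ] H} {x₀ v : E}
    (hδcont : ∀ᶠ x in 𝓝 x₀, ContinuousAt δ x) (hδ : HasFDerivAt δ δ' x₀) (hδ0 : δ x₀ = 0)
    (hjump : ∀ᵐ x ∂μ, h + δ x ∈ closure M) {t : ℕ → ℝ} (ht : Tendsto t atTop (𝓝[>] 0))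
    (hsupp : ∀ n, x₀ + t n • v ∈ μ.support) :
    δ' v ∈ posTangentConeAt M h := by
  have hpoints := tendsto_add_smul_of_tendsto_zero (tendsto_nhds_of_tendsto_nhdsWithin ht) x₀ v
  have hclosure : ∀ᶠ n in atTop, h + δ (x₀ + t n • v) ∈ closure M :=
    (hpoints.eventually hδcont).mono fun n hn ↦
      (continuousAt_const.add hn).mem_closure_of_mem_support (hsupp n) hjump
  simpa [hδ0] using (hδ.const_add h).mem_posTangentConeAt_of_eventually_mem ht hclosure

theorem stmt_18_general
    {H E : Type*}
    [NormedAddCommGroup H] [InnerProductSpace ℝ H]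
    [NormedAddCommGroup E] [NormedSpace ℝ E]
    [MeasurableSpace E]
    (F : Measure E)
    (M : Set H) (h : H) (hhM : h ∈ M)
    (U : Set H) (hU : IsOpen U) (hhU : h ∈ U)
    (m : ℕ) [NeZero m]
    (V : Set (EuclideanSpace ℝ (Fin m)))
    (hV : ∃ Vt : Set (EuclideanSpace ℝ (Fin m)), IsOpen Vt ∧
      Vt ∩ {y : EuclideanSpace ℝ (Fin m) | 0 ≤ y 0} = V)
    (φ : EuclideanSpace ℝ (Fin m) → H)
    (hφC1 : ContDiff ℝ 1 φ)
    (hφbij : Set.BijOn φ V (U ∩ M))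
    (Φ : H → EuclideanSpace ℝ (Fin m))
    (hΦC1 : ContDiff ℝ 1 Φ)
    (hΦφ : ∀ y' ∈ V, Φ (φ y') = y')
    (δ : E → H) (x₀ : E)
    (hδcont : ∃ W : Set E, IsOpen W ∧ x₀ ∈ W ∧ ContinuousOn δ W)
    (hδdiff : DifferentiableAt ℝ δ x₀)
    (hδ0 : δ x₀ = 0)
    (hjump : ∀ᵐ x ∂F, h + δ x ∈ closure M)
    (v : E) :
    -- (1)
    ((∃ t : ℕ → ℝ, (∀ n, 0 < t n) ∧ Tendsto t atTop (nhds 0) ∧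
        ((∀ n, x₀ + t n • v ∈ {x : E | ∀ ε : ℝ, 0 < ε → 0 < F (Metric.ball x ε)}) ∨
         (∀ n, x₀ - t n • v ∈ {x : E | ∀ ε : ℝ, 0 < ε → 0 < F (Metric.ball x ε)}))) →
      fderiv ℝ δ x₀ v ∈ Set.range (fderiv ℝ φ (Φ h))) ∧
    -- (2)
    ((Φ h) 0 = 0 →
      (∃ t : ℕ → ℝ, (∀ n, 0 < t n) ∧ Tendsto t atTop (nhds 0) ∧
        ∀ n, x₀ + t n • v ∈ {x : E | ∀ ε : ℝ, 0 < ε → 0 < F (Metric.ball x ε)}) →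
      fderiv ℝ δ x₀ v ∈
        ⇑(fderiv ℝ φ (Φ h)) '' {w : EuclideanSpace ℝ (Fin m) | 0 ≤ w 0}) ∧
    -- (3)
    ((Φ h) 0 = 0 →
      (∃ t s : ℕ → ℝ, (∀ n, 0 < t n) ∧ (∀ n, 0 < s n) ∧
        Tendsto t atTop (nhds 0) ∧ Tendsto s atTop (nhds 0) ∧
        (∀ n, x₀ + t n • v ∈ {x : E | ∀ ε : ℝ, 0 < ε → 0 < F (Metric.ball x ε)}) ∧
        (∀ n, x₀ - s n • v ∈ {x : E | ∀ ε : ℝ, 0 < ε → 0 < F (Metric.ball x ε)})) →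
      fderiv ℝ δ x₀ v ∈
        ⇑(fderiv ℝ φ (Φ h)) '' {w : EuclideanSpace ℝ (Fin m) | w 0 = 0}) := by
  obtain ⟨W, hW, hx₀W, hδW⟩ := hδcont
  obtain ⟨Vt, -, rfl⟩ := hV
  have hφ := hφC1.differentiable one_ne_zero (Φ h)
  have hΦ := hΦC1.differentiable one_ne_zero h
  have hinv : RightInvOn Φ φ (U ∩ M) := hφbij.image_eq ▸ LeftInvOn.rightInvOn_image hΦφ
  have hhalf : MapsTo Φ (U ∩ M) {y | 0 ≤ EuclideanSpace.proj (0 : Fin m) y} :=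
    fun _ hz ↦ (LeftInvOn.mapsTo hΦφ hφbij.surjOn hz).2
  have cone : ∀ w (t : ℕ → ℝ), (∀ n, 0 < t n) → Tendsto t atTop (𝓝 0) →
      (∀ n, x₀ + t n • w ∈ {x : E | ∀ ε : ℝ, 0 < ε → 0 < F (Metric.ball x ε)}) →
      fderiv ℝ δ x₀ w ∈ posTangentConeAt (U ∩ M) h := fun w t ht_pos ht hsupp ↦ by
    rw [Set.inter_comm]
    exact (tangentConeAt_inter_nhds (hU.mem_nhds hhU)).ge <|
      mem_posTangentConeAt_of_ae_add_mem_closure F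
        (eventually_of_mem (hW.mem_nhds hx₀W) fun x hx ↦ hδW.continuousAt (hW.mem_nhds hx))
        hδdiff.hasFDerivAt hδ0 hjump (tendsto_nhdsWithin_iff.2 ⟨ht, .of_forall ht_pos⟩)
        fun n ↦ Measure.mem_support_of_forall_measure_ball_pos (hsupp n)
  have cone_neg : ∀ t : ℕ → ℝ, (∀ n, 0 < t n) → Tendsto t atTop (𝓝 0) →
      (∀ n, x₀ - t n • v ∈ {x : E | ∀ ε : ℝ, 0 < ε → 0 < F (Metric.ball x ε)}) →
      -fderiv ℝ δ x₀ v ∈ posTangentConeAt (U ∩ M) h := fun t ht_pos ht hsupp ↦ by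
    simpa using cone (-v) t ht_pos ht fun n ↦ by simpa [sub_eq_add_neg] using hsupp n
  have hfix := fun w (hw : w ∈ posTangentConeAt (U ∩ M) h) ↦
    fderiv_apply_fderiv_eq_self_of_rightInvOn hinv ⟨hhU, hhM⟩ hφ hΦ (tangentConeAt_mono_field hw)
  refine ⟨?_, ?_, ?_⟩
  · rintro ⟨t, ht_pos, ht, hplus | hminus⟩
    · exact ⟨_, hfix _ (cone v t ht_pos ht hplus)⟩
    · exact ⟨_, by simpa using hfix _ (cone_neg t ht_pos ht hminus)⟩
  · rintro hy ⟨t, ht_pos, ht, hplus⟩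
    have hcone := cone v t ht_pos ht hplus
    exact ⟨_, fderiv_apply_nonneg_of_mapsTo_halfSpace hΦ hhalf hy hcone, hfix _ hcone⟩
  · rintro hy ⟨t, s, ht_pos, hs_pos, ht, hs, hplus, hminus⟩
    have hcone := cone v t ht_pos ht hplus
    exact ⟨_, fderiv_apply_eq_zero_of_mapsTo_halfSpace hΦ hhalf hy hcone
      (cone_neg s hs_pos hs hminus), hfix _ hcone⟩

theorem stmt_18
    {H E : Type*}
    [NormedAddCommGroup H] [InnerProductSpace ℝ H] [CompleteSpace H]
    [TopologicalSpace.SeparableSpace H]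
    [NormedAddCommGroup E] [NormedSpace ℝ E]
    [MeasurableSpace E] [BorelSpace E]
    (F : Measure E) [SigmaFinite F]
    (M : Set H) (hMne : M.Nonempty) (h : H) (hhM : h ∈ M)
    (U : Set H) (hU : IsOpen U) (hhU : h ∈ U)
    (m : ℕ) [NeZero m] (hm : 1 ≤ m)
    (V : Set (EuclideanSpace ℝ (Fin m)))
    (hV : ∃ Vt : Set (EuclideanSpace ℝ (Fin m)), IsOpen Vt ∧
      Vt ∩ {y : EuclideanSpace ℝ (Fin m) | 0 ≤ y 0} = V)
    (φ : EuclideanSpace ℝ (Fin m) → H)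
    (hφC1 : ContDiff ℝ 1 φ)
    (hφbij : Set.BijOn φ V (U ∩ M))
    (hφinj : ∀ y' ∈ V, Function.Injective (fderiv ℝ φ y'))
    (Φ : H → EuclideanSpace ℝ (Fin m))
    (hΦC1 : ContDiff ℝ 1 Φ)
    (hΦφ : ∀ y' ∈ V, Φ (φ y') = y')
    (δ : E → H) (x₀ : E)
    (hδcont : ∃ W : Set E, IsOpen W ∧ x₀ ∈ W ∧ ContinuousOn δ W)
    (hδdiff : DifferentiableAt ℝ δ x₀)
    (hδ0 : δ x₀ = 0)
    (hjump : ∀ᵐ x ∂F, h + δ x ∈ closure M)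
    (v : E) (hv : v ≠ 0) :
    -- (1)
    ((∃ t : ℕ → ℝ, (∀ n, 0 < t n) ∧ Tendsto t atTop (nhds 0) ∧
        ((∀ n, x₀ + t n • v ∈ {x : E | ∀ ε : ℝ, 0 < ε → 0 < F (Metric.ball x ε)}) ∨
         (∀ n, x₀ - t n • v ∈ {x : E | ∀ ε : ℝ, 0 < ε → 0 < F (Metric.ball x ε)}))) →
      fderiv ℝ δ x₀ v ∈ Set.range (fderiv ℝ φ (Φ h))) ∧
    -- (2)
    ((Φ h) 0 = 0 →
      (∃ t : ℕ → ℝ, (∀ n, 0 < t n) ∧ Tendsto t atTop (nhds 0) ∧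
        ∀ n, x₀ + t n • v ∈ {x : E | ∀ ε : ℝ, 0 < ε → 0 < F (Metric.ball x ε)}) →
      fderiv ℝ δ x₀ v ∈
        ⇑(fderiv ℝ φ (Φ h)) '' {w : EuclideanSpace ℝ (Fin m) | 0 ≤ w 0}) ∧
    -- (3)
    ((Φ h) 0 = 0 →
      (∃ t s : ℕ → ℝ, (∀ n, 0 < t n) ∧ (∀ n, 0 < s n) ∧
        Tendsto t atTop (nhds 0) ∧ Tendsto s atTop (nhds 0) ∧
        (∀ n, x₀ + t n • v ∈ {x : E | ∀ ε : ℝ, 0 < ε → 0 < F (Metric.ball x ε)}) ∧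
        (∀ n, x₀ - s n • v ∈ {x : E | ∀ ε : ℝ, 0 < ε → 0 < F (Metric.ball x ε)})) →
      fderiv ℝ δ x₀ v ∈
        ⇑(fderiv ℝ φ (Φ h)) '' {w : EuclideanSpace ℝ (Fin m) | w 0 = 0}) :=
  stmt_18_general F M h hhM U hU hhU m V hV φ hφC1 hφbij Φ hΦC1 hΦφ δ x₀ hδcont hδdiff hδ0 hjump v
end
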